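/- arXiv:2509.09886 — 4 statements merged into one kernel-verified Lean document; each statement's English description precedes it below -/
import Mathlib

section
/- (q-Pythagoras) For every complex number v, one has C_q(t·v) · C_q(v) + t · S_q(t·v) · S_q(v) = 1. -/
open scoped BigOperators

/-- The q-Pochhammer symbol `(a;q)_n = ∏_{i=0}^{n-1} (1 - a·q^i)`. -/
noncomputable def qPoch (a q : ℂ) (n : ℕ) : ℂ :=
  ∏ i ∈ Finset.range n, (1 - a * q ^ i)

/-- The q-sine `S_q(z) = Σ_{n≥0} (−1)^n · q^(n(n+1)) · z^(2n+1) / (q;q)_{2n+1}`, with `q = t²`. -/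
noncomputable def Sq (t z : ℂ) : ℂ :=
  ∑' n : ℕ, (-1 : ℂ) ^ n * (t ^ 2) ^ (n * (n + 1)) * z ^ (2 * n + 1) /
    qPoch (t ^ 2) (t ^ 2) (2 * n + 1)

/-- The q-cosine `C_q(z) = Σ_{n≥0} (−1)^n · q^(n²) · z^(2n) / (q;q)_{2n}`, with `q = t²`. -/
noncomputable def Cq (t z : ℂ) : ℂ :=
  ∑' n : ℕ, (-1 : ℂ) ^ n * (t ^ 2) ^ (n ^ 2) * z ^ (2 * n) /
    qPoch (t ^ 2) (t ^ 2) (2 * n)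

/-! ### Auxiliary lemmas -/

section Aux

lemma qPoch_succ' (a q : ℂ) (n : ℕ) : qPoch a q (n + 1) = qPoch a q n * (1 - a * q ^ n) :=
  Finset.prod_range_succ _ _

lemma qPoch_zero' (a q : ℂ) : qPoch a q 0 = 1 := Finset.prod_range_zero _

variable {q : ℂ}

lemma qFactor_ne_zero (hq1 : ‖q‖ < 1) (i : ℕ) : (1 : ℂ) - q * q ^ i ≠ 0 := by
  intro h
  have h1 : q * q ^ i = 1 := by linear_combination -h
  have h2 : ‖q * q ^ i‖ < 1 := by
    rw [norm_mul, norm_pow]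
    calc ‖q‖ * ‖q‖ ^ i ≤ ‖q‖ * 1 := by
          apply mul_le_mul_of_nonneg_left (pow_le_one₀ (norm_nonneg _) hq1.le) (norm_nonneg _)
      _ = ‖q‖ := mul_one _
      _ < 1 := hq1
  rw [h1] at h2
  simp at h2

lemma qPoch_ne_zero (hq1 : ‖q‖ < 1) (n : ℕ) : qPoch q q n ≠ 0 := by
  induction n with
  | zero => simp [qPoch]
  | succ n ih =>
    rw [qPoch_succ']
    exact mul_ne_zero ih (qFactor_ne_zero hq1 n)

lemma norm_qPoch_ge (hq1 : ‖q‖ < 1) (n : ℕ) : (1 - ‖q‖) ^ n ≤ ‖qPoch q q n‖ := by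
  induction n with
  | zero => simp [qPoch]
  | succ n ih =>
    rw [qPoch_succ', norm_mul, pow_succ]
    have h1 : (0 : ℝ) ≤ 1 - ‖q‖ := by linarith
    have h2 : 1 - ‖q‖ ≤ ‖1 - q * q ^ n‖ := by
      have h3 : ‖(1 : ℂ)‖ - ‖q * q ^ n‖ ≤ ‖1 - q * q ^ n‖ := norm_sub_norm_le _ _
      have h4 : ‖q * q ^ n‖ ≤ ‖q‖ := by
        rw [norm_mul, norm_pow]
        calc ‖q‖ * ‖q‖ ^ n ≤ ‖q‖ * 1 :=
              mul_le_mul_of_nonneg_left (pow_le_one₀ (norm_nonneg _) hq1.le) (norm_nonneg _)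
          _ = ‖q‖ := mul_one _
      rw [norm_one] at h3
      linarith
    calc (1 - ‖q‖) ^ n * (1 - ‖q‖) ≤ ‖qPoch q q n‖ * ‖1 - q * q ^ n‖ := by
          apply mul_le_mul ih h2 h1 (norm_nonneg _)
      _ = ‖qPoch q q n‖ * ‖1 - q * q ^ n‖ := rfl

lemma summable_aux {b r C : ℝ} (hb0 : 0 ≤ b) (hb1 : b < 1) (hr : 0 ≤ r) (hC : 0 ≤ C)
    (a : ℕ → ℂ) (h : ∀ n, ‖a n‖ ≤ C * b ^ (n * n) * r ^ n) :
    Summable fun n => ‖a n‖ := by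
  have h2 : Filter.Tendsto (fun n : ℕ => b ^ n * r) Filter.atTop (nhds 0) := by
    simpa using (tendsto_pow_atTop_nhds_zero_of_lt_one hb0 hb1).mul_const r
  have h3 : ∀ᶠ n : ℕ in Filter.atTop, b ^ n * r < 1 / 2 :=
    h2.eventually_lt_const (by norm_num)
  apply Summable.of_norm_bounded_eventually_nat
    ((summable_geometric_of_lt_one (by norm_num : (0:ℝ) ≤ 1 / 2) (by norm_num)).mul_left C)
  filter_upwards [h3] with n hn
  rw [Real.norm_of_nonneg (norm_nonneg _)]
  calc ‖a n‖ ≤ C * b ^ (n * n) * r ^ n := h n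
    _ = C * (b ^ n * r) ^ n := by rw [mul_pow, pow_mul]; ring
    _ ≤ C * (1 / 2) ^ n := by
        apply mul_le_mul_of_nonneg_left _ hC
        apply pow_le_pow_left₀ (by positivity) hn.le

lemma summable_cos (hq1 : ‖q‖ < 1) (z : ℂ) :
    Summable fun n => ‖(-1 : ℂ) ^ n * q ^ (n ^ 2) * z ^ (2 * n) / qPoch q q (2 * n)‖ := by
  have hq : (0 : ℝ) < 1 - ‖q‖ := by linarith
  apply summable_aux (b := ‖q‖) (r := (‖z‖ / (1 - ‖q‖)) ^ 2) (C := 1) (norm_nonneg _) hq1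
    (by positivity) (by norm_num)
  intro n
  have hP : (0:ℝ) < (1 - ‖q‖) ^ (2 * n) := by positivity
  have hPle : (1 - ‖q‖) ^ (2 * n) ≤ ‖qPoch q q (2 * n)‖ := norm_qPoch_ge hq1 (2 * n)
  have e1 : ‖(-1 : ℂ) ^ n * q ^ (n ^ 2) * z ^ (2 * n) / qPoch q q (2 * n)‖
      = ‖q‖ ^ (n ^ 2) * ‖z‖ ^ (2 * n) / ‖qPoch q q (2 * n)‖ := by
    rw [norm_div, norm_mul, norm_mul, norm_pow, norm_pow, norm_pow, norm_neg, norm_one,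
      one_pow, one_mul]
  rw [e1]
  calc ‖q‖ ^ (n ^ 2) * ‖z‖ ^ (2 * n) / ‖qPoch q q (2 * n)‖
      ≤ ‖q‖ ^ (n ^ 2) * ‖z‖ ^ (2 * n) / (1 - ‖q‖) ^ (2 * n) :=
        div_le_div_of_nonneg_left (by positivity) hP hPle
    _ = 1 * ‖q‖ ^ (n * n) * ((‖z‖ / (1 - ‖q‖)) ^ 2) ^ n := by
        rw [← pow_mul, div_pow, show n ^ 2 = n * n from sq n]
        field_simp

lemma summable_sin (hq1 : ‖q‖ < 1) (z : ℂ) :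
    Summable fun n =>
      ‖(-1 : ℂ) ^ n * q ^ (n * (n + 1)) * z ^ (2 * n + 1) / qPoch q q (2 * n + 1)‖ := by
  have hq : (0 : ℝ) < 1 - ‖q‖ := by linarith
  apply summable_aux (b := ‖q‖) (r := ‖q‖ * (‖z‖ / (1 - ‖q‖)) ^ 2)
    (C := ‖z‖ / (1 - ‖q‖)) (norm_nonneg _) hq1 (by positivity) (by positivity)
  intro n
  have hP : (0:ℝ) < (1 - ‖q‖) ^ (2 * n + 1) := by positivity
  have hPle : (1 - ‖q‖) ^ (2 * n + 1) ≤ ‖qPoch q q (2 * n + 1)‖ := norm_qPoch_ge hq1 (2 * n + 1)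
  have e1 : ‖(-1 : ℂ) ^ n * q ^ (n * (n + 1)) * z ^ (2 * n + 1) / qPoch q q (2 * n + 1)‖
      = ‖q‖ ^ (n * (n + 1)) * ‖z‖ ^ (2 * n + 1) / ‖qPoch q q (2 * n + 1)‖ := by
    rw [norm_div, norm_mul, norm_mul, norm_pow, norm_pow, norm_pow, norm_neg, norm_one,
      one_pow, one_mul]
  rw [e1]
  calc ‖q‖ ^ (n * (n + 1)) * ‖z‖ ^ (2 * n + 1) / ‖qPoch q q (2 * n + 1)‖
      ≤ ‖q‖ ^ (n * (n + 1)) * ‖z‖ ^ (2 * n + 1) / (1 - ‖q‖) ^ (2 * n + 1) :=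
        div_le_div_of_nonneg_left (by positivity) hP hPle
    _ = ‖z‖ / (1 - ‖q‖) * ‖q‖ ^ (n * n) * (‖q‖ * (‖z‖ / (1 - ‖q‖)) ^ 2) ^ n := by
        rw [mul_pow, ← pow_mul, div_pow]
        rw [show n * (n + 1) = n * n + n by ring, pow_add]
        field_simp
        ring

/-! ### Gaussian binomial coefficients and the q-binomial theorem -/

noncomputable def gbq (q : ℂ) (M k : ℕ) : ℂ :=
  qPoch q q M / (qPoch q q k * qPoch q q (M - k))

lemma gbq_zero (hq1 : ‖q‖ < 1) (M : ℕ) : gbq q M 0 = 1 := by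
  rw [gbq, Nat.sub_zero, qPoch_zero', one_mul, div_self (qPoch_ne_zero hq1 M)]

lemma gbq_self (hq1 : ‖q‖ < 1) (M : ℕ) : gbq q M M = 1 := by
  rw [gbq, Nat.sub_self, qPoch_zero', mul_one, div_self (qPoch_ne_zero hq1 M)]

lemma gbq_pascal (hq1 : ‖q‖ < 1) (a b : ℕ) :
    gbq q (a + b + 2) (a + 1) = gbq q (a + b + 1) (a + 1) + q ^ (b + 1) * gbq q (a + b + 1) a := by
  have e1 : a + b + 2 - (a + 1) = b + 1 := by omega
  have e2 : a + b + 1 - (a + 1) = b := by omega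
  have e3 : a + b + 1 - a = b + 1 := by omega
  rw [gbq, gbq, gbq, e1, e2, e3]
  have h2 : qPoch q q (a + b + 2) = qPoch q q (a + b + 1) * (1 - q * q ^ (a + b + 1)) :=
    qPoch_succ' _ _ _
  have ha : qPoch q q (a + 1) = qPoch q q a * (1 - q * q ^ a) := qPoch_succ' _ _ _
  have hb : qPoch q q (b + 1) = qPoch q q b * (1 - q * q ^ b) := qPoch_succ' _ _ _
  have nza : qPoch q q a ≠ 0 := qPoch_ne_zero hq1 a
  have nzb : qPoch q q b ≠ 0 := qPoch_ne_zero hq1 b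
  have nzab : qPoch q q (a + b + 1) ≠ 0 := qPoch_ne_zero hq1 (a + b + 1)
  have nfa : (1 : ℂ) - q * q ^ a ≠ 0 := qFactor_ne_zero hq1 a
  have nfb : (1 : ℂ) - q * q ^ b ≠ 0 := qFactor_ne_zero hq1 b
  rw [h2, ha, hb]
  field_simp
  ring

lemma choose_two_succ (n : ℕ) : (n + 1).choose 2 = n.choose 2 + n := by
  simp [Nat.choose_succ_succ, Nat.choose_one_right]
  omega

lemma ch_even (m : ℕ) : (2 * m).choose 2 + m = 2 * (m * m) := by
  induction m with
  | zero => rfl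
  | succ k ih =>
    have h1 := choose_two_succ (2 * k + 1)
    have h2 := choose_two_succ (2 * k)
    have h3 : 2 * (k + 1) = 2 * k + 1 + 1 := by omega
    have h4 : (k + 1) * (k + 1) = k * k + 2 * k + 1 := by ring
    rw [h3, h1, h2]
    omega

lemma ch_odd (m : ℕ) : (2 * m + 1).choose 2 = 2 * (m * m) + m := by
  have h1 := choose_two_succ (2 * m)
  have h2 := ch_even m
  omega

theorem qbinom (hq1 : ‖q‖ < 1) (x : ℂ) (M : ℕ) :
    ∏ i ∈ Finset.range M, (1 - x * q ^ i) =
      ∑ k ∈ Finset.range (M + 1), (-1 : ℂ) ^ k * q ^ (k.choose 2) * x ^ k * gbq q M k := by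
  induction M with
  | zero =>
    simp [gbq, qPoch]
  | succ M ih =>
    rw [Finset.prod_range_succ, ih]
    have hpt : ∀ k ∈ Finset.range (M + 2),
        (-1 : ℂ) ^ k * q ^ (k.choose 2) * x ^ k * gbq q (M + 1) k
        = (if k ≤ M then (-1 : ℂ) ^ k * q ^ (k.choose 2) * x ^ k * gbq q M k else 0)
          + (-(x * q ^ M)) * (if k = 0 then 0 else
              (-1 : ℂ) ^ (k - 1) * q ^ ((k - 1).choose 2) * x ^ (k - 1) * gbq q M (k - 1)) := by
      intro k hk
      match k with
      | 0 =>
        rw [if_pos (Nat.zero_le M), if_pos rfl, gbq_zero hq1, gbq_zero hq1]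
        ring
      | (j + 1) =>
        rw [if_neg (Nat.succ_ne_zero j), Nat.add_sub_cancel]
        have hk2 : j + 1 < M + 2 := Finset.mem_range.mp hk
        rcases lt_or_ge j M with hjM | hjM
        · -- 1 ≤ k ≤ M : Pascal
          obtain ⟨b, hb⟩ : ∃ b, M = j + 1 + b := ⟨M - (j + 1), by omega⟩
          subst hb
          rw [if_pos (show j + 1 ≤ j + 1 + b by omega)]
          rw [show j + 1 + b + 1 = j + b + 2 by omega]
          rw [show j + 1 + b = j + b + 1 by omega]
          rw [gbq_pascal hq1 j b, choose_two_succ j]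
          ring
        · -- k = M + 1
          have hjM' : j = M := by omega
          subst hjM'
          rw [if_neg (show ¬(j + 1 ≤ j) by omega), gbq_self hq1, gbq_self hq1,
            choose_two_succ j]
          ring
    rw [Finset.sum_congr rfl hpt, Finset.sum_add_distrib]
    have hu : (∑ k ∈ Finset.range (M + 2),
        if k ≤ M then (-1 : ℂ) ^ k * q ^ (k.choose 2) * x ^ k * gbq q M k else 0)
        = ∑ k ∈ Finset.range (M + 1), (-1 : ℂ) ^ k * q ^ (k.choose 2) * x ^ k * gbq q M k := by
      rw [Finset.sum_range_succ, if_neg (show ¬(M + 1 ≤ M) by omega), add_zero]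
      apply Finset.sum_congr rfl
      intro k hk
      rw [if_pos (by exact Nat.lt_succ_iff.mp (Finset.mem_range.mp hk))]
    have hw : (∑ k ∈ Finset.range (M + 2), (-(x * q ^ M)) * (if k = 0 then 0 else
          (-1 : ℂ) ^ (k - 1) * q ^ ((k - 1).choose 2) * x ^ (k - 1) * gbq q M (k - 1)))
        = (-(x * q ^ M)) * ∑ k ∈ Finset.range (M + 1),
            (-1 : ℂ) ^ k * q ^ (k.choose 2) * x ^ k * gbq q M k := by
      rw [Finset.sum_range_succ']
      have h1 : ∀ i ∈ Finset.range (M + 1),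
          (-(x * q ^ M)) * (if i + 1 = 0 then (0 : ℂ) else
            (-1 : ℂ) ^ (i + 1 - 1) * q ^ ((i + 1 - 1).choose 2) * x ^ (i + 1 - 1) *
              gbq q M (i + 1 - 1))
          = (-(x * q ^ M)) * ((-1 : ℂ) ^ i * q ^ (i.choose 2) * x ^ i * gbq q M i) := by
        intro i _
        rw [if_neg (Nat.succ_ne_zero i), Nat.add_sub_cancel]
      rw [Finset.sum_congr rfl h1, if_pos (rfl : (0 : ℕ) = 0), mul_zero, add_zero,
        ← Finset.mul_sum]
    rw [hu, hw]
    ring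

lemma qsum_zero (hq0 : q ≠ 0) (hq1 : ‖q‖ < 1) (N : ℕ) :
    (∑ k ∈ Finset.range (2 * N + 3),
      (-1 : ℂ) ^ k * q ^ (k.choose 2) * ((q⁻¹) ^ N) ^ k * gbq q (2 * N + 2) k) = 0 := by
  have h := qbinom hq1 ((q⁻¹) ^ N) (2 * N + 2)
  rw [show 2 * N + 2 + 1 = 2 * N + 3 by omega] at h
  rw [← h]
  apply Finset.prod_eq_zero (Finset.mem_range.mpr (show N < 2 * N + 2 by omega))
  have h2 : (q⁻¹) ^ N * q ^ N = 1 := by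
    rw [← mul_pow, inv_mul_cancel₀ hq0, one_pow]
  rw [h2, sub_self]

lemma qsum_zero' (hq0 : q ≠ 0) (hq1 : ‖q‖ < 1) (N : ℕ) :
    (∑ k ∈ Finset.range (2 * N + 3),
      (-1 : ℂ) ^ k * q ^ ((N + 1) ^ 2 + k.choose 2) * ((q⁻¹) ^ N) ^ k /
        (qPoch q q k * qPoch q q (2 * N + 2 - k))) = 0 := by
  have key : (∑ k ∈ Finset.range (2 * N + 3),
      (-1 : ℂ) ^ k * q ^ ((N + 1) ^ 2 + k.choose 2) * ((q⁻¹) ^ N) ^ k /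
        (qPoch q q k * qPoch q q (2 * N + 2 - k)))
      = (q ^ ((N + 1) ^ 2) / qPoch q q (2 * N + 2)) * ∑ k ∈ Finset.range (2 * N + 3),
          (-1 : ℂ) ^ k * q ^ (k.choose 2) * ((q⁻¹) ^ N) ^ k * gbq q (2 * N + 2) k := by
    rw [Finset.mul_sum]
    apply Finset.sum_congr rfl
    intro k _
    rw [gbq]
    have h1 : qPoch q q k ≠ 0 := qPoch_ne_zero hq1 k
    have h2 : qPoch q q (2 * N + 2 - k) ≠ 0 := qPoch_ne_zero hq1 _
    have h3 : qPoch q q (2 * N + 2) ≠ 0 := qPoch_ne_zero hq1 _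
    field_simp
    ring
  rw [key, qsum_zero hq0 hq1, mul_zero]

lemma sum_even_odd (h : ℕ → ℂ) (n : ℕ) :
    ∑ k ∈ Finset.range (2 * n + 1), h k
      = (∑ m ∈ Finset.range (n + 1), h (2 * m)) + ∑ m ∈ Finset.range n, h (2 * m + 1) := by
  induction n with
  | zero => simp
  | succ n ih =>
    rw [show 2 * (n + 1) + 1 = (2 * n + 1) + 1 + 1 by omega]
    rw [Finset.sum_range_succ, Finset.sum_range_succ, ih,
      Finset.sum_range_succ (fun m => h (2 * m)) (n + 1),
      Finset.sum_range_succ (fun m => h (2 * m + 1)) n]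
    rw [show 2 * (n + 1) = 2 * n + 1 + 1 by omega]
    ring

lemma qpow_cancel (hq0 : q ≠ 0) {A B C : ℕ} (h : A = C + B) : q ^ A * (q⁻¹) ^ B = q ^ C := by
  subst h
  rw [pow_add, mul_assoc, ← mul_pow, mul_inv_cancel₀ hq0, one_pow, mul_one]

/-- The key finite identity. -/
lemma key_identity (hq0 : q ≠ 0) (hq1 : ‖q‖ < 1) (N : ℕ) :
    (∑ m ∈ Finset.range (N + 2),
        q ^ (m ^ 2 + (N + 1 - m) ^ 2 + m) /
          (qPoch q q (2 * m) * qPoch q q (2 * (N + 1 - m))))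
      = ∑ m ∈ Finset.range (N + 1),
          q ^ (m * (m + 1) + (N - m) * ((N - m) + 1) + (m + 1)) /
            (qPoch q q (2 * m + 1) * qPoch q q (2 * (N - m) + 1)) := by
  have h0 := qsum_zero' hq0 hq1 N
  rw [show 2 * N + 3 = 2 * (N + 1) + 1 by omega] at h0
  rw [sum_even_odd (fun k => (-1 : ℂ) ^ k * q ^ ((N + 1) ^ 2 + k.choose 2) * ((q⁻¹) ^ N) ^ k /
    (qPoch q q k * qPoch q q (2 * N + 2 - k))) (N + 1)] at h0
  have he : ∀ m ∈ Finset.range (N + 2),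
      (-1 : ℂ) ^ (2 * m) * q ^ ((N + 1) ^ 2 + (2 * m).choose 2) * ((q⁻¹) ^ N) ^ (2 * m) /
        (qPoch q q (2 * m) * qPoch q q (2 * N + 2 - 2 * m))
      = q ^ (m ^ 2 + (N + 1 - m) ^ 2 + m) /
          (qPoch q q (2 * m) * qPoch q q (2 * (N + 1 - m))) := by
    intro m hm
    have hmN : m ≤ N + 1 := by
      have := Finset.mem_range.mp hm; omega
    obtain ⟨j, hj⟩ : ∃ j, N + 1 = m + j := ⟨N + 1 - m, by omega⟩
    rw [show N + 1 - m = j by omega, show 2 * N + 2 - 2 * m = 2 * j by omega]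
    have hsgn : (-1 : ℂ) ^ (2 * m) = 1 := by
      rw [pow_mul]; norm_num
    have hxp : ((q⁻¹) ^ N) ^ (2 * m) = (q⁻¹) ^ (N * (2 * m)) := (pow_mul _ _ _).symm
    have hexp : (N + 1) ^ 2 + (2 * m).choose 2 = (m ^ 2 + j ^ 2 + m) + N * (2 * m) := by
      have hc := ch_even m
      zify at hc hj ⊢
      linear_combination hc + ((N : ℤ) + 1 - m + j) * hj
    rw [hsgn, one_mul, hxp, qpow_cancel hq0 hexp]
  have ho : ∀ m ∈ Finset.range (N + 1),
      (-1 : ℂ) ^ (2 * m + 1) * q ^ ((N + 1) ^ 2 + (2 * m + 1).choose 2) *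
          ((q⁻¹) ^ N) ^ (2 * m + 1) /
        (qPoch q q (2 * m + 1) * qPoch q q (2 * N + 2 - (2 * m + 1)))
      = -(q ^ (m * (m + 1) + (N - m) * ((N - m) + 1) + (m + 1)) /
          (qPoch q q (2 * m + 1) * qPoch q q (2 * (N - m) + 1))) := by
    intro m hm
    have hmN : m ≤ N := by
      have := Finset.mem_range.mp hm; omega
    obtain ⟨j, hj⟩ : ∃ j, N = m + j := ⟨N - m, by omega⟩
    rw [show N - m = j by omega, show 2 * N + 2 - (2 * m + 1) = 2 * j + 1 by omega]
    have hsgn : (-1 : ℂ) ^ (2 * m + 1) = -1 := by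
      rw [pow_succ, pow_mul]; norm_num
    have hxp : ((q⁻¹) ^ N) ^ (2 * m + 1) = (q⁻¹) ^ (N * (2 * m + 1)) := (pow_mul _ _ _).symm
    have hexp : (N + 1) ^ 2 + (2 * m + 1).choose 2
        = (m * (m + 1) + j * (j + 1) + (m + 1)) + N * (2 * m + 1) := by
      have hc := ch_odd m
      zify at hc hj ⊢
      linear_combination hc + ((N : ℤ) + 1 - m + j) * hj
    rw [hsgn, hxp]
    rw [show (-1 : ℂ) * q ^ ((N + 1) ^ 2 + (2 * m + 1).choose 2) * (q⁻¹) ^ (N * (2 * m + 1))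
      = -(q ^ ((N + 1) ^ 2 + (2 * m + 1).choose 2) * (q⁻¹) ^ (N * (2 * m + 1))) by ring]
    rw [qpow_cancel hq0 hexp, neg_div]
  rw [Finset.sum_congr rfl he, Finset.sum_congr rfl ho] at h0
  rw [Finset.sum_neg_distrib] at h0
  linear_combination h0

end Aux

/-- q-Pythagoras: for every complex `v`, `C_q(t·v) · C_q(v) + t · S_q(t·v) · S_q(v) = 1`. -/
theorem stmt_2 (t : ℂ) (ht0 : 0 < ‖t‖) (ht1 : ‖t‖ < 1) (v : ℂ) :
    Cq t (t * v) * Cq t v + t * Sq t (t * v) * Sq t v = 1 := by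
  have ht0' : t ≠ 0 := by
    intro h; rw [h] at ht0; simp at ht0
  have hq0 : (t ^ 2 : ℂ) ≠ 0 := pow_ne_zero 2 ht0'
  have hq1 : ‖(t ^ 2 : ℂ)‖ < 1 := by
    rw [norm_pow]
    have : ‖t‖ = ‖t‖ := rfl
    calc ‖t‖ ^ 2 < 1 ^ 2 := by
          apply pow_lt_pow_left₀ (by rwa [this]) (norm_nonneg t) (by norm_num)
      _ = 1 := one_pow 2
  set q : ℂ := t ^ 2 with hqdef
  -- the four coefficient sequences
  set fC : ℂ → ℕ → ℂ := fun z n => (-1 : ℂ) ^ n * q ^ (n ^ 2) * z ^ (2 * n) / qPoch q q (2 * n)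
    with hfC
  set fS : ℂ → ℕ → ℂ :=
    fun z n => (-1 : ℂ) ^ n * q ^ (n * (n + 1)) * z ^ (2 * n + 1) / qPoch q q (2 * n + 1)
    with hfS
  have hc1 : Summable fun n => ‖fC (t * v) n‖ := summable_cos hq1 (t * v)
  have hc2 : Summable fun n => ‖fC v n‖ := summable_cos hq1 v
  have hs1 : Summable fun n => ‖fS (t * v) n‖ := summable_sin hq1 (t * v)
  have hs2 : Summable fun n => ‖fS v n‖ := summable_sin hq1 v
  have hCq : ∀ z : ℂ, Cq t z = ∑' n, fC z n := fun z => rfl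
  have hSq : ∀ z : ℂ, Sq t z = ∑' n, fS z n := fun z => rfl
  have hCC : Cq t (t * v) * Cq t v
      = ∑' n, ∑ k ∈ Finset.range (n + 1), fC (t * v) k * fC v (n - k) := by
    rw [hCq, hCq]
    exact tsum_mul_tsum_eq_tsum_sum_range_of_summable_norm hc1 hc2
  have hSS : Sq t (t * v) * Sq t v
      = ∑' n, ∑ k ∈ Finset.range (n + 1), fS (t * v) k * fS v (n - k) := by
    rw [hSq, hSq]
    exact tsum_mul_tsum_eq_tsum_sum_range_of_summable_norm hs1 hs2
  set A : ℕ → ℂ := fun n => ∑ k ∈ Finset.range (n + 1), fC (t * v) k * fC v (n - k) with hA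
  set B : ℕ → ℂ := fun n => ∑ k ∈ Finset.range (n + 1), fS (t * v) k * fS v (n - k) with hB
  have hAsm : Summable A := (summable_norm_sum_mul_range_of_summable_norm hc1 hc2).of_norm
  have hBsm : Summable B := (summable_norm_sum_mul_range_of_summable_norm hs1 hs2).of_norm
  -- A 0 = 1
  have hA0 : A 0 = 1 := by
    rw [hA]
    simp only [Finset.sum_range_one, Nat.sub_zero]
    rw [hfC]
    simp [qPoch]
  -- each A (n+1) + t * B n = 0
  have hzero : ∀ n : ℕ, A (n + 1) + t * B n = 0 := by
    intro n
    have hAeq : A (n + 1) = (-1 : ℂ) ^ (n + 1) * v ^ (2 * n + 2) *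
        ∑ m ∈ Finset.range (n + 2),
          q ^ (m ^ 2 + (n + 1 - m) ^ 2 + m) /
            (qPoch q q (2 * m) * qPoch q q (2 * (n + 1 - m))) := by
      rw [hA, Finset.mul_sum]
      apply Finset.sum_congr rfl
      intro k hk
      have hkn : k ≤ n + 1 := by have := Finset.mem_range.mp hk; omega
      obtain ⟨j, hj⟩ : ∃ j, n + 1 = k + j := ⟨n + 1 - k, by omega⟩
      rw [hfC]
      simp only []
      rw [show n + 1 - k = j by omega, show 2 * n + 2 = 2 * (n + 1) by omega, hj]
      have hqe : q = t ^ 2 := hqdef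
      rw [hqe]
      ring
    have hBeq : t * B n = (-1 : ℂ) ^ n * v ^ (2 * n + 2) *
        ∑ m ∈ Finset.range (n + 1),
          q ^ (m * (m + 1) + (n - m) * ((n - m) + 1) + (m + 1)) /
            (qPoch q q (2 * m + 1) * qPoch q q (2 * (n - m) + 1)) := by
      rw [hB, Finset.mul_sum, Finset.mul_sum]
      apply Finset.sum_congr rfl
      intro k hk
      have hkn : k ≤ n := by have := Finset.mem_range.mp hk; omega
      obtain ⟨j, hj⟩ : ∃ j, n = k + j := ⟨n - k, by omega⟩
      rw [hfS]
      simp only []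
      rw [show n - k = j by omega, show 2 * n + 2 = 2 * (k + j) + 2 by omega, hj]
      have hqe : q = t ^ 2 := hqdef
      rw [hqe]
      ring
    rw [hAeq, hBeq, key_identity hq0 hq1 n]
    ring
  -- assemble
  rw [hCC, mul_assoc, hSS]
  have hstep1 : ∑' n, A n = A 0 + ∑' n, A (n + 1) := Summable.tsum_eq_zero_add hAsm
  have hAsm' : Summable fun n => A (n + 1) := (summable_nat_add_iff 1).mpr hAsm
  have htB : t * ∑' n, B n = ∑' n, t * B n := (tsum_mul_left).symm
  have hBsm' : Summable fun n => t * B n := hBsm.mul_left t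
  rw [hstep1, htB]
  have : (∑' n, A (n + 1)) + ∑' n, t * B n = ∑' n, (A (n + 1) + t * B n) :=
    (Summable.tsum_add hAsm' hBsm').symm
  rw [hA0, add_assoc, this]
  simp only [hzero]
  rw [tsum_zero, add_zero]
end

section
/- For every odd integer r, the absolutely convergent series Σ_{e ∈ ℤ} (−1)^e · I_Δ(e−r, e) equals 0. -/
open scoped BigOperators

/-- The tetrahedral index `I_Δ(m,e)`, with `q = t²`:
`I_Δ(m,e) = Σ_{n ≥ max(0,−e)} (−1)^n · t^(n(n+1) − (2n+e)·m) / ((q;q)_n · (q;q)_{n+e})`. -/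
noncomputable def Itet (t : ℂ) (m e : ℤ) : ℂ :=
  ∑' n : ℕ,
    if (n : ℤ) + e < 0 then 0
    else ((-1 : ℂ) ^ n * t ^ ((n : ℤ) * ((n : ℤ) + 1) - (2 * (n : ℤ) + e) * m)) /
      (qPoch (t ^ 2) (t ^ 2) n * qPoch (t ^ 2) (t ^ 2) ((n : ℤ) + e).toNat)

namespace Stmt7

lemma factor_norm_ge (t : ℂ) (hT : ‖t‖ < 1) (i : ℕ) :
    1 - ‖t‖ ^ 2 ≤ ‖1 - t ^ 2 * (t ^ 2) ^ i‖ := by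
  have h1 : ‖t ^ 2 * (t ^ 2) ^ i‖ = (‖t‖ ^ 2) ^ (i + 1) := by
    rw [norm_mul, norm_pow, norm_pow, norm_pow, ← pow_succ']
  have h2 : (‖t‖ ^ 2) ^ (i + 1) ≤ ‖t‖ ^ 2 := by
    calc (‖t‖ ^ 2) ^ (i + 1) ≤ (‖t‖ ^ 2) ^ 1 :=
          pow_le_pow_of_le_one (by positivity) (by nlinarith [norm_nonneg t]) (by omega)
      _ = ‖t‖ ^ 2 := pow_one _
  calc 1 - ‖t‖ ^ 2 ≤ 1 - ‖t ^ 2 * (t ^ 2) ^ i‖ := by rw [h1]; linarith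
    _ ≤ ‖1 - t ^ 2 * (t ^ 2) ^ i‖ := by
        have := norm_sub_norm_le (1 : ℂ) (t ^ 2 * (t ^ 2) ^ i)
        simpa using this

lemma poch_norm_ge (t : ℂ) (hT : ‖t‖ < 1) (n : ℕ) :
    (1 - ‖t‖ ^ 2) ^ n ≤ ‖qPoch (t ^ 2) (t ^ 2) n‖ := by
  induction n with
  | zero => simp [qPoch]
  | succ n ih =>
    rw [qPoch, Finset.prod_range_succ, norm_mul, pow_succ]
    have h0 : (0:ℝ) ≤ 1 - ‖t‖ ^ 2 := by nlinarith [norm_nonneg t]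
    exact mul_le_mul ih (factor_norm_ge t hT n) h0 (norm_nonneg _)

lemma poch_pos (t : ℂ) (hT : ‖t‖ < 1) (n : ℕ) : 0 < ‖qPoch (t ^ 2) (t ^ 2) n‖ := by
  have h0 : (0:ℝ) < 1 - ‖t‖ ^ 2 := by nlinarith [norm_nonneg t]
  exact lt_of_lt_of_le (pow_pos h0 n) (poch_norm_ge t hT n)

lemma poch_ne (t : ℂ) (hT : ‖t‖ < 1) (n : ℕ) : qPoch (t ^ 2) (t ^ 2) n ≠ 0 :=
  norm_pos_iff.mp (poch_pos t hT n)

lemma poch_inv_le (t : ℂ) (hT : ‖t‖ < 1) (n : ℕ) :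
    ‖(qPoch (t ^ 2) (t ^ 2) n)⁻¹‖ ≤ ((1 - ‖t‖ ^ 2)⁻¹) ^ n := by
  have h0 : (0:ℝ) < 1 - ‖t‖ ^ 2 := by nlinarith [norm_nonneg t]
  rw [norm_inv, inv_pow]
  exact inv_anti₀ (pow_pos h0 n) (poch_norm_ge t hT n)

lemma master0 {a D : ℝ} (ha0 : 0 < a) (ha1 : a < 1) (hD : 0 ≤ D) :
    Summable (fun n : ℕ => D ^ n * a ^ (n * n)) := by
  obtain ⟨N, hN⟩ : ∃ N : ℕ, D * a ^ N < 1 := by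
    obtain ⟨N, hN⟩ := exists_pow_lt_of_lt_one (show (0:ℝ) < 1/(D+1) by positivity) ha1
    refine ⟨N, ?_⟩
    have h3 : D * a ^ N ≤ D * (1/(D+1)) := mul_le_mul_of_nonneg_left hN.le hD
    have h4 : D * (1/(D+1)) < 1 := by
      rw [div_eq_mul_inv, one_mul, ← div_eq_mul_inv, div_lt_one (by positivity)]
      linarith
    linarith
  have hDa : 0 ≤ D * a ^ N := by positivity
  rw [← summable_nat_add_iff N]
  refine Summable.of_nonneg_of_le (fun n => by positivity) (fun n => ?_)
    ((summable_geometric_of_lt_one hDa hN).mul_left ((D * a ^ N) ^ N))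
  have h1 : a ^ ((n + N) * (n + N)) ≤ a ^ (N * (n + N)) :=
    pow_le_pow_of_le_one ha0.le ha1.le (by nlinarith)
  calc D ^ (n + N) * a ^ ((n + N) * (n + N)) ≤ D ^ (n + N) * a ^ (N * (n + N)) := by
        apply mul_le_mul_of_nonneg_left h1 (by positivity)
    _ = (D * a ^ N) ^ (n + N) := by rw [mul_pow, ← pow_mul]
    _ = (D * a ^ N) ^ N * (D * a ^ N) ^ n := by rw [pow_add]; ring

lemma masterZ (t : ℂ) (ht : t ≠ 0) (hT : ‖t‖ < 1) (D : ℝ) (hD : 0 ≤ D) (c : ℤ) :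
    Summable (fun n : ℕ => D ^ n * ‖t‖ ^ ((n : ℤ) * n + c * n)) := by
  have hT0 : (0:ℝ) < ‖t‖ := norm_pos_iff.mpr ht
  have key : ∀ n : ℕ, D ^ n * ‖t‖ ^ ((n : ℤ) * n + c * n)
      = (D * ‖t‖ ^ c) ^ n * ‖t‖ ^ (n * n) := by
    intro n
    calc D ^ n * ‖t‖ ^ ((n : ℤ) * n + c * n)
        = D ^ n * (‖t‖ ^ ((n:ℤ) * n) * ‖t‖ ^ (c * (n:ℤ))) := by
          rw [← zpow_add₀ (ne_of_gt hT0)]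
      _ = (D * ‖t‖ ^ c) ^ n * ‖t‖ ^ (n * n) := by
          rw [mul_pow,
            show ((‖t‖:ℝ) ^ c) ^ n = ‖t‖ ^ (c * (n:ℤ)) by
              rw [← zpow_natCast (‖t‖ ^ c) n, ← zpow_mul],
            show (‖t‖:ℝ) ^ (n * n : ℕ) = ‖t‖ ^ ((n:ℤ) * n) by
              rw [← zpow_natCast ‖t‖ (n * n)]; push_cast; ring_nf]
          ring
  have := master0 (a := ‖t‖) (D := D * ‖t‖ ^ c) hT0 hT (by positivity)
  exact this.congr (fun n => (key n).symm)

/-- Euler-type series: `A(N) = Σ_j (-1)^j q^{j(j+1)/2 + Nj} / (q;q)_j` with `q = t²`. -/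
noncomputable def aa (t : ℂ) (N : ℤ) (j : ℕ) : ℂ :=
  (-1 : ℂ) ^ j * t ^ ((j : ℤ) * ((j : ℤ) + 1) + 2 * N * j) / qPoch (t ^ 2) (t ^ 2) j

noncomputable def AF (t : ℂ) (N : ℤ) : ℂ := ∑' j : ℕ, aa t N j

lemma aa_norm_le (t : ℂ) (ht : t ≠ 0) (hT : ‖t‖ < 1) (N : ℤ) (j : ℕ) :
    ‖aa t N j‖ ≤ ((1 - ‖t‖ ^ 2)⁻¹) ^ j * ‖t‖ ^ ((j : ℤ) * j + (2 * N + 1) * j) := by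
  have hTpos : (0:ℝ) < ‖t‖ := norm_pos_iff.mpr ht
  have hE : (j : ℤ) * ((j : ℤ) + 1) + 2 * N * j = (j : ℤ) * j + (2 * N + 1) * j := by ring
  rw [aa, hE, norm_div, norm_mul, norm_zpow, norm_pow, norm_neg, norm_one, one_pow, one_mul,
    div_eq_mul_inv, ← norm_inv, mul_comm]
  exact mul_le_mul_of_nonneg_right (poch_inv_le t hT j) (by positivity)

lemma Bnn (t : ℂ) (hT : ‖t‖ < 1) : (0:ℝ) ≤ (1 - ‖t‖ ^ 2)⁻¹ := by
  have h0 : (0:ℝ) < 1 - ‖t‖ ^ 2 := by nlinarith [norm_nonneg t]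
  positivity

lemma summable_aa (t : ℂ) (ht : t ≠ 0) (hT : ‖t‖ < 1) (N : ℤ) : Summable (aa t N) := by
  apply Summable.of_norm
  exact Summable.of_nonneg_of_le (fun j => norm_nonneg _) (aa_norm_le t ht hT N)
    (masterZ t ht hT _ (Bnn t hT) (2 * N + 1))

lemma aa_zero (t : ℂ) (N : ℤ) : aa t N 0 = 1 := by
  simp [aa, qPoch]

lemma AF_rec (t : ℂ) (ht : t ≠ 0) (hT : ‖t‖ < 1) (N : ℤ) :
    AF t N = (1 - (t ^ 2) ^ (N + 1)) * AF t (N + 1) := by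
  have hsub : AF t N - AF t (N + 1) = ∑' j : ℕ, (aa t N j - aa t (N + 1) j) :=
    (Summable.tsum_sub (summable_aa t ht hT N) (summable_aa t ht hT (N + 1))).symm
  have hg : Summable (fun j => aa t N j - aa t (N + 1) j) :=
    (summable_aa t ht hT N).sub (summable_aa t ht hT (N + 1))
  have t2 : t ^ (2:ℤ) = t ^ 2 := by
    rw [show (2:ℤ) = ((2:ℕ):ℤ) by norm_num, zpow_natCast]
  have hb : t ^ (2 * N + 2 : ℤ) = (t ^ 2) ^ (N + 1) := by
    rw [show (2 * N + 2 : ℤ) = 2 * (N + 1) by ring, zpow_mul, t2]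
  have hstep : ∀ j : ℕ, aa t N (j + 1) - aa t (N + 1) (j + 1)
      = -(t ^ 2) ^ (N + 1) * aa t (N + 1) j := by
    intro j
    have hPj := poch_ne t hT j
    have hfac : (1 : ℂ) - t ^ 2 * (t ^ 2) ^ j ≠ 0 := by
      have := poch_ne t hT (j + 1)
      rw [qPoch, Finset.prod_range_succ] at this
      exact right_ne_zero_of_mul this
    have hu : t ^ (2 * (j:ℤ) + 2 : ℤ) = t ^ 2 * (t ^ 2) ^ j := by
      rw [show (2 * (j:ℤ) + 2 : ℤ) = 2 * ((j:ℤ) + 1) by ring, zpow_mul, t2,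
        show ((j:ℤ) + 1) = ((j + 1 : ℕ) : ℤ) by push_cast; ring, zpow_natCast, pow_succ']
    simp only [aa]
    rw [qPoch, Finset.prod_range_succ, ← qPoch]
    push_cast
    rw [show ((j:ℤ)+1) * (((j:ℤ)+1)+1) + 2*N*((j:ℤ)+1)
        = ((j:ℤ)*((j:ℤ)+1) + 2*(N+1)*(j:ℤ)) + (2*N+2) by ring]
    rw [show ((j:ℤ)+1) * (((j:ℤ)+1)+1) + 2*(N+1)*((j:ℤ)+1)
        = (((j:ℤ)*((j:ℤ)+1) + 2*(N+1)*(j:ℤ)) + (2*N+2)) + (2*(j:ℤ)+2) by ring]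
    rw [zpow_add₀ ht (((j:ℤ)*((j:ℤ)+1) + 2*(N+1)*(j:ℤ)) + (2*N+2)) (2*(j:ℤ)+2)]
    rw [zpow_add₀ ht ((j:ℤ)*((j:ℤ)+1) + 2*(N+1)*(j:ℤ)) (2*N+2)]
    rw [hb, hu]
    field_simp
    ring
  rw [Summable.tsum_eq_zero_add hg] at hsub
  simp only [aa_zero, sub_self, zero_add] at hsub
  rw [tsum_congr hstep, tsum_mul_left] at hsub
  have hAF : AF t N - AF t (N + 1) = -(t ^ 2) ^ (N + 1) * AF t (N + 1) := hsub
  linear_combination hAF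

lemma AF_zero_eq (t : ℂ) (ht : t ≠ 0) (hT : ‖t‖ < 1) (N : ℕ) :
    AF t 0 = qPoch (t ^ 2) (t ^ 2) N * AF t N := by
  induction N with
  | zero => simp [qPoch]
  | succ n ih =>
    rw [ih, AF_rec t ht hT (n : ℤ)]
    have h1 : qPoch (t^2) (t^2) (n+1) = qPoch (t^2) (t^2) n * (1 - t^2*(t^2)^n) := by
      rw [qPoch, qPoch, Finset.prod_range_succ]
    have h2 : (t ^ 2) ^ ((n : ℤ) + 1) = t ^ 2 * (t ^ 2) ^ n := by
      rw [show ((n:ℤ) + 1) = ((n + 1 : ℕ) : ℤ) by push_cast; ring, zpow_natCast, pow_succ']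
    rw [h1, h2]
    push_cast
    ring

lemma AF_neg (t : ℂ) (ht : t ≠ 0) (hT : ‖t‖ < 1) (N : ℤ) (hN : N < 0) : AF t N = 0 := by
  have base : AF t (-1) = 0 := by
    have := AF_rec t ht hT (-1)
    simpa using this
  have step : ∀ k : ℕ, AF t (-1 - k) = 0 := by
    intro k
    induction k with
    | zero => simpa using base
    | succ n ih =>
      have h := AF_rec t ht hT (-1 - ((n:ℤ) + 1))
      rw [show (-1 - ((n:ℤ) + 1) + 1 : ℤ) = -1 - n by ring] at h
      push_cast
      rw [h, ih, mul_zero]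
  have : N = -1 - ((-1 - N).toNat : ℤ) := by
    have := Int.toNat_of_nonneg (by omega : (0:ℤ) ≤ -1 - N)
    omega
  rw [this]
  exact step _

lemma AF0_ne (t : ℂ) (ht : t ≠ 0) (hT : ‖t‖ < 1) : AF t 0 ≠ 0 := by
  have hTpos : (0:ℝ) < ‖t‖ := norm_pos_iff.mpr ht
  set B : ℝ := (1 - ‖t‖ ^ 2)⁻¹ with hBdef
  have hB0 : (0:ℝ) ≤ B := Bnn t hT
  -- comparison function u and its summability
  have hu : Summable (fun j : ℕ => B ^ j * ‖t‖ ^ ((j:ℤ) * j + 1 * j)) :=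
    masterZ t ht hT B hB0 1
  have hu1 : Summable (fun j : ℕ => B ^ (j+1) * ‖t‖ ^ (((j:ℕ)+1:ℤ) * ((j:ℕ)+1) + 1 * ((j:ℕ)+1))) := by
    have := (summable_nat_add_iff 1).2 hu
    apply this.congr
    intro j
    push_cast
    norm_num
  set C : ℝ := ∑' j : ℕ, B ^ (j+1) * ‖t‖ ^ (((j:ℕ)+1:ℤ) * ((j:ℕ)+1) + 1 * ((j:ℕ)+1)) with hCdef
  have hC0 : 0 ≤ C := tsum_nonneg (fun j => by positivity)
  -- choose N with ‖t‖^(2N) * C < 1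
  obtain ⟨N, hN⟩ : ∃ N : ℕ, (‖t‖ ^ 2) ^ N * C < 1 := by
    obtain ⟨N, hN⟩ := exists_pow_lt_of_lt_one (show (0:ℝ) < 1/(C+1) by positivity)
      (show ‖t‖ ^ 2 < 1 by nlinarith [norm_nonneg t])
    refine ⟨N, ?_⟩
    have h3 : (‖t‖^2)^N * C ≤ (1/(C+1)) * C := by
      apply mul_le_mul_of_nonneg_right hN.le hC0
    have h4 : (1/(C+1)) * C < 1 := by
      rw [div_mul_eq_mul_div, one_mul, div_lt_one (by positivity)]
      linarith
    linarith
  -- ‖AF t N - 1‖ < 1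
  have hbound : ∀ j : ℕ, ‖aa t (N:ℤ) (j+1)‖
      ≤ (‖t‖^2)^N * (B ^ (j+1) * ‖t‖ ^ (((j:ℕ)+1:ℤ) * ((j:ℕ)+1) + 1 * ((j:ℕ)+1))) := by
    intro j
    refine le_trans (aa_norm_le t ht hT N (j+1)) ?_
    have hexp : (2 * (N:ℤ)) + ((((j:ℕ)+1:ℤ)) * ((j:ℕ)+1) + 1 * ((j:ℕ)+1))
        ≤ ((j+1:ℕ):ℤ) * (j+1:ℕ) + (2 * N + 1) * ((j+1:ℕ):ℤ) := by
      push_cast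
      nlinarith [Int.natCast_nonneg j, Int.natCast_nonneg N]
    have := zpow_le_zpow_right_of_le_one₀ hTpos hT.le hexp
    calc B ^ (j+1) * ‖t‖ ^ (((j+1:ℕ):ℤ) * (j+1:ℕ) + (2 * N + 1) * ((j+1:ℕ):ℤ))
        ≤ B ^ (j+1) * (‖t‖ ^ (2 * (N:ℤ)) * ‖t‖ ^ ((((j:ℕ)+1:ℤ)) * ((j:ℕ)+1) + 1 * ((j:ℕ)+1))) := by
          rw [← zpow_add₀ (ne_of_gt hTpos)]
          exact mul_le_mul_of_nonneg_left this (by positivity)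
      _ = (‖t‖^2)^N * (B ^ (j+1) * ‖t‖ ^ (((j:ℕ)+1:ℤ) * ((j:ℕ)+1) + 1 * ((j:ℕ)+1))) := by
          rw [show ‖t‖ ^ ((2:ℤ) * (N:ℤ)) = (‖t‖^(2:ℤ))^((N:ℤ)) from zpow_mul ‖t‖ 2 (N:ℤ)]
          rw [show (‖t‖:ℝ)^(2:ℤ) = ‖t‖^2 by rw [show (2:ℤ) = ((2:ℕ):ℤ) by norm_num, zpow_natCast]]
          rw [zpow_natCast]
          ring
  have hs : Summable (fun j : ℕ => ‖aa t (N:ℤ) (j+1)‖) :=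
    Summable.of_nonneg_of_le (fun j => norm_nonneg _) hbound (hu1.mul_left ((‖t‖^2)^N))
  have hAFN : AF t (N:ℤ) = 1 + ∑' j : ℕ, aa t (N:ℤ) (j+1) := by
    have h := Summable.tsum_eq_zero_add (summable_aa t ht hT N)
    rw [aa_zero] at h
    exact h
  have hnorm : ‖AF t (N:ℤ) - 1‖ ≤ (‖t‖^2)^N * C := by
    rw [hAFN, add_sub_cancel_left]
    calc ‖∑' j : ℕ, aa t (N:ℤ) (j+1)‖ ≤ ∑' j : ℕ, ‖aa t (N:ℤ) (j+1)‖ :=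
          norm_tsum_le_tsum_norm hs
      _ ≤ ∑' j : ℕ, (‖t‖^2)^N * (B ^ (j+1) * ‖t‖ ^ (((j:ℕ)+1:ℤ) * ((j:ℕ)+1) + 1 * ((j:ℕ)+1))) :=
          Summable.tsum_le_tsum hbound hs (hu1.mul_left _)
      _ = (‖t‖^2)^N * C := tsum_mul_left
  have hAFN_ne : AF t (N:ℤ) ≠ 0 := by
    intro h0
    rw [h0] at hnorm
    simp only [zero_sub, norm_neg, norm_one] at hnorm
    linarith
  rw [AF_zero_eq t ht hT N]
  exact mul_ne_zero (poch_ne t hT N) hAFN_ne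

/-- exponent of the double-sum representation -/
def GG (m e : ℤ) (n j : ℕ) : ℤ :=
  (n:ℤ) * ((n:ℤ) + 1) - (2 * (n:ℤ) + e) * m + ((j:ℤ) * ((j:ℤ) + 1) + 2 * ((n:ℤ) + e) * (j:ℤ))

noncomputable def cde (t : ℂ) (m e : ℤ) (n j : ℕ) : ℂ :=
  ((-1 : ℂ) ^ n * (-1 : ℂ) ^ j) * t ^ (GG m e n j) /
    (qPoch (t ^ 2) (t ^ 2) n * qPoch (t ^ 2) (t ^ 2) j)

lemma cde_eq_prod (t : ℂ) (ht : t ≠ 0) (m e : ℤ) (n j : ℕ) :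
    cde t m e n j = ((-1 : ℂ) ^ n * t ^ ((n:ℤ) * ((n:ℤ) + 1) - (2 * (n:ℤ) + e) * m) /
      qPoch (t ^ 2) (t ^ 2) n) * aa t ((n:ℤ) + e) j := by
  rw [cde, aa, GG, zpow_add₀ ht]
  ring

lemma cde_swap (t : ℂ) (m e : ℤ) (n j : ℕ) :
    cde t (-e) (-m) n j = cde t m e j n := by
  rw [cde, cde, show GG (-e) (-m) n j = GG m e j n by rw [GG, GG]; ring]
  ring

lemma cde_norm_le (t : ℂ) (ht : t ≠ 0) (hT : ‖t‖ < 1) (m e : ℤ) (n j : ℕ) :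
    ‖cde t m e n j‖ ≤ ‖t‖ ^ (-(e * m)) *
      (((1 - ‖t‖ ^ 2)⁻¹) ^ n * ‖t‖ ^ ((n:ℤ) * n + (-(2 * |m|)) * n) *
       (((1 - ‖t‖ ^ 2)⁻¹) ^ j * ‖t‖ ^ ((j:ℤ) * j + (-(2 * |e|)) * j))) := by
  have hTpos : (0:ℝ) < ‖t‖ := norm_pos_iff.mpr ht
  have hne := ne_of_gt hTpos
  have h1 : ‖cde t m e n j‖ = ‖t‖ ^ (GG m e n j) *
      (‖(qPoch (t ^ 2) (t ^ 2) n)⁻¹‖ * ‖(qPoch (t ^ 2) (t ^ 2) j)⁻¹‖) := by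
    rw [cde, norm_div, norm_mul, norm_mul, norm_mul, norm_pow, norm_pow, norm_neg, norm_one,
      one_pow, one_pow, one_mul, one_mul, norm_zpow, div_eq_mul_inv, mul_inv, norm_inv,
      norm_inv]
  have hexp : (-(e * m)) + (((n:ℤ) * n + (-(2 * |m|)) * n) + ((j:ℤ) * j + (-(2 * |e|)) * j))
      ≤ GG m e n j := by
    rw [GG]
    nlinarith [Int.natCast_nonneg n, Int.natCast_nonneg j,
      mul_nonneg (Int.natCast_nonneg n) (sub_nonneg.mpr (le_abs_self m)),
      mul_nonneg (Int.natCast_nonneg j) (by linarith [neg_abs_le e] : (0:ℤ) ≤ |e| + e),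
      mul_nonneg (Int.natCast_nonneg n) (Int.natCast_nonneg j)]
  have h2 : ‖t‖ ^ (GG m e n j) ≤ ‖t‖ ^ ((-(e * m)) + (((n:ℤ) * n + (-(2 * |m|)) * n) + ((j:ℤ) * j + (-(2 * |e|)) * j))) :=
    zpow_le_zpow_right_of_le_one₀ hTpos hT.le hexp
  rw [h1]
  calc ‖t‖ ^ (GG m e n j) * (‖(qPoch (t ^ 2) (t ^ 2) n)⁻¹‖ * ‖(qPoch (t ^ 2) (t ^ 2) j)⁻¹‖)
      ≤ ‖t‖ ^ ((-(e * m)) + (((n:ℤ) * n + (-(2 * |m|)) * n) + ((j:ℤ) * j + (-(2 * |e|)) * j))) *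
        (((1 - ‖t‖ ^ 2)⁻¹) ^ n * ((1 - ‖t‖ ^ 2)⁻¹) ^ j) := by
        apply mul_le_mul h2 ?_ (mul_nonneg (norm_nonneg _) (norm_nonneg _))
          (zpow_nonneg (norm_nonneg t) _)
        exact mul_le_mul (poch_inv_le t hT n) (poch_inv_le t hT j) (norm_nonneg _)
          (pow_nonneg (Bnn t hT) n)
    _ = ‖t‖ ^ (-(e * m)) *
      (((1 - ‖t‖ ^ 2)⁻¹) ^ n * ‖t‖ ^ ((n:ℤ) * n + (-(2 * |m|)) * n) *
       (((1 - ‖t‖ ^ 2)⁻¹) ^ j * ‖t‖ ^ ((j:ℤ) * j + (-(2 * |e|)) * j))) := by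
        rw [zpow_add₀ hne, zpow_add₀ hne]
        ring

lemma summable_cde (t : ℂ) (ht : t ≠ 0) (hT : ‖t‖ < 1) (m e : ℤ) :
    Summable (fun p : ℕ × ℕ => cde t m e p.1 p.2) := by
  have h1 : Summable (fun n : ℕ => ((1 - ‖t‖ ^ 2)⁻¹) ^ n * ‖t‖ ^ ((n:ℤ) * n + (-(2 * |m|)) * n)) :=
    masterZ t ht hT _ (Bnn t hT) _
  have h2 : Summable (fun j : ℕ => ((1 - ‖t‖ ^ 2)⁻¹) ^ j * ‖t‖ ^ ((j:ℤ) * j + (-(2 * |e|)) * j)) :=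
    masterZ t ht hT _ (Bnn t hT) _
  have h1n : 0 ≤ (fun n : ℕ => ((1 - ‖t‖ ^ 2)⁻¹) ^ n * ‖t‖ ^ ((n:ℤ) * n + (-(2 * |m|)) * n)) :=
    fun n => mul_nonneg (pow_nonneg (Bnn t hT) n) (zpow_nonneg (norm_nonneg t) _)
  have h2n : 0 ≤ (fun j : ℕ => ((1 - ‖t‖ ^ 2)⁻¹) ^ j * ‖t‖ ^ ((j:ℤ) * j + (-(2 * |e|)) * j)) :=
    fun j => mul_nonneg (pow_nonneg (Bnn t hT) j) (zpow_nonneg (norm_nonneg t) _)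
  have hprod := Summable.mul_of_nonneg h1 h2 h1n h2n
  apply Summable.of_norm
  exact Summable.of_nonneg_of_le (fun p => norm_nonneg _)
    (fun p => cde_norm_le t ht hT m e p.1 p.2) (hprod.mul_left _)

lemma AF_mul_Itet (t : ℂ) (ht : t ≠ 0) (hT : ‖t‖ < 1) (m e : ℤ) :
    AF t 0 * Itet t m e = ∑' p : ℕ × ℕ, cde t m e p.1 p.2 := by
  have hrowS : ∀ n : ℕ, Summable (fun j => cde t m e n j) := by
    intro n
    have := (summable_aa t ht hT ((n:ℤ) + e)).mul_left
      ((-1 : ℂ) ^ n * t ^ ((n:ℤ) * ((n:ℤ) + 1) - (2 * (n:ℤ) + e) * m) / qPoch (t ^ 2) (t ^ 2) n)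
    exact this.congr (fun j => (cde_eq_prod t ht m e n j).symm)
  have hiter : ∑' p : ℕ × ℕ, cde t m e p.1 p.2 = ∑' (n : ℕ) (j : ℕ), cde t m e n j :=
    Summable.tsum_prod' (summable_cde t ht hT m e) hrowS
  rw [hiter, Itet, ← tsum_mul_left]
  apply tsum_congr
  intro n
  have hrow : ∑' j : ℕ, cde t m e n j = ((-1 : ℂ) ^ n *
      t ^ ((n:ℤ) * ((n:ℤ) + 1) - (2 * (n:ℤ) + e) * m) / qPoch (t ^ 2) (t ^ 2) n) *
      AF t ((n:ℤ) + e) := by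
    rw [AF, ← tsum_mul_left]
    exact tsum_congr (fun j => cde_eq_prod t ht m e n j)
  rw [hrow]
  by_cases hcase : (n:ℤ) + e < 0
  · rw [if_pos hcase, AF_neg t ht hT _ hcase, mul_zero, mul_zero]
  · rw [if_neg hcase]
    push_neg at hcase
    have hN : ((n:ℤ) + e) = (((n:ℤ) + e).toNat : ℤ) := (Int.toNat_of_nonneg hcase).symm
    have hAF : AF t ((n:ℤ) + e) = AF t 0 / qPoch (t ^ 2) (t ^ 2) ((n:ℤ) + e).toNat := by
      rw [hN, AF_zero_eq t ht hT ((n:ℤ) + e).toNat]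
      field_simp [poch_ne t hT]
      rw [Int.toNat_natCast]
    rw [hAF]
    have h1 := poch_ne t hT n
    have h2 := poch_ne t hT ((n:ℤ) + e).toNat
    field_simp

lemma Itet_dual (t : ℂ) (ht : t ≠ 0) (hT : ‖t‖ < 1) (m e : ℤ) :
    Itet t m e = Itet t (-e) (-m) := by
  have h1 := AF_mul_Itet t ht hT m e
  have h2 := AF_mul_Itet t ht hT (-e) (-m)
  have h3 : ∑' p : ℕ × ℕ, cde t (-e) (-m) p.1 p.2 = ∑' p : ℕ × ℕ, cde t m e p.1 p.2 := by
    rw [← (Equiv.prodComm ℕ ℕ).tsum_eq (fun p : ℕ × ℕ => cde t m e p.1 p.2)]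
    exact tsum_congr (fun p => cde_swap t m e p.1 p.2)
  apply mul_left_cancel₀ (AF0_ne t ht hT)
  rw [h1, h2, h3]

noncomputable def CC (t : ℂ) (r : ℤ) : ℝ :=
  ∑' n : ℕ, (((1 - ‖t‖ ^ 2)⁻¹) ^ 2) ^ n * ‖t‖ ^ ((n:ℤ) * n + (-(2 * |r|)) * n)

lemma summable_v (t : ℂ) (ht : t ≠ 0) (hT : ‖t‖ < 1) (r : ℤ) :
    Summable (fun n : ℕ => (((1 - ‖t‖ ^ 2)⁻¹) ^ 2) ^ n * ‖t‖ ^ ((n:ℤ) * n + (-(2 * |r|)) * n)) :=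
  masterZ t ht hT _ (pow_nonneg (Bnn t hT) 2) _

lemma CC_nonneg (t : ℂ) (ht : t ≠ 0) (hT : ‖t‖ < 1) (r : ℤ) : 0 ≤ CC t r :=
  tsum_nonneg (fun n => mul_nonneg (pow_nonneg (pow_nonneg (Bnn t hT) 2) n)
    (zpow_nonneg (norm_nonneg t) _))

lemma Itet_bound (t : ℂ) (ht : t ≠ 0) (hT : ‖t‖ < 1) (r e : ℤ) (he : e ≤ 0) :
    ‖Itet t (e - r) e‖ ≤ CC t r * ‖t‖ ^ (e * e + |r| * e) := by
  have hTpos : (0:ℝ) < ‖t‖ := norm_pos_iff.mpr ht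
  have hne := ne_of_gt hTpos
  have hB0 := Bnn t hT
  have hB1 : 1 ≤ (1 - ‖t‖ ^ 2)⁻¹ := by
    have h0 : (0:ℝ) < 1 - ‖t‖ ^ 2 := by nlinarith [norm_nonneg t]
    have h1 : 1 - ‖t‖ ^ 2 ≤ 1 := by nlinarith [norm_nonneg t]
    exact (one_le_inv₀ h0).2 h1
  set v : ℕ → ℝ := fun n => (((1 - ‖t‖ ^ 2)⁻¹) ^ 2) ^ n * ‖t‖ ^ ((n:ℤ) * n + (-(2 * |r|)) * n)
    with hv
  have hv0 : ∀ n, 0 ≤ v n := fun n => mul_nonneg (pow_nonneg (pow_nonneg hB0 2) n)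
    (zpow_nonneg (norm_nonneg t) _)
  set τ : ℕ → ℂ := fun n =>
    if (n : ℤ) + e < 0 then 0
    else ((-1 : ℂ) ^ n * t ^ ((n : ℤ) * ((n : ℤ) + 1) - (2 * (n : ℤ) + e) * (e - r))) /
      (qPoch (t ^ 2) (t ^ 2) n * qPoch (t ^ 2) (t ^ 2) ((n : ℤ) + e).toNat) with hτ
  have hbnd : ∀ n : ℕ, ‖τ n‖ ≤ v n * ‖t‖ ^ (e * e + |r| * e) := by
    intro n
    by_cases hcase : (n : ℤ) + e < 0
    · simp only [hτ, if_pos hcase, norm_zero]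
      exact mul_nonneg (hv0 n) (zpow_nonneg (norm_nonneg t) _)
    · push_neg at hcase
      set k : ℕ := ((n : ℤ) + e).toNat with hk
      have hkn : k ≤ n := Int.toNat_le.mpr (by omega)
      have hnorm : ‖τ n‖ = ‖t‖ ^ ((n : ℤ) * ((n : ℤ) + 1) - (2 * (n : ℤ) + e) * (e - r)) *
          (‖qPoch (t ^ 2) (t ^ 2) n‖⁻¹ * ‖qPoch (t ^ 2) (t ^ 2) k‖⁻¹) := by
        simp only [hτ, if_neg (not_lt.mpr hcase)]
        rw [norm_div, norm_mul, norm_pow, norm_neg, norm_one, one_pow, one_mul, norm_zpow,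
          norm_mul, div_eq_mul_inv, mul_inv]
      have hexp : (((n:ℤ) * n + (-(2 * |r|)) * n) + (e * e + |r| * e))
          ≤ (n : ℤ) * ((n : ℤ) + 1) - (2 * (n : ℤ) + e) * (e - r) := by
        nlinarith [mul_nonneg hcase (neg_nonneg.mpr he),
          mul_nonneg (Int.natCast_nonneg n) (by linarith [neg_abs_le r] : (0:ℤ) ≤ |r| + r),
          mul_nonneg (neg_nonneg.mpr he) (by linarith [le_abs_self r] : (0:ℤ) ≤ |r| - r),
          Int.natCast_nonneg n]
      have hzle : ‖t‖ ^ ((n : ℤ) * ((n : ℤ) + 1) - (2 * (n : ℤ) + e) * (e - r))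
          ≤ ‖t‖ ^ ((n:ℤ) * n + (-(2 * |r|)) * n) * ‖t‖ ^ (e * e + |r| * e) := by
        rw [← zpow_add₀ hne]
        exact zpow_le_zpow_right_of_le_one₀ hTpos hT.le hexp
      have hinv : ‖qPoch (t ^ 2) (t ^ 2) n‖⁻¹ * ‖qPoch (t ^ 2) (t ^ 2) k‖⁻¹
          ≤ (((1 - ‖t‖ ^ 2)⁻¹) ^ 2) ^ n := by
        have i1 : ‖qPoch (t ^ 2) (t ^ 2) n‖⁻¹ ≤ ((1 - ‖t‖ ^ 2)⁻¹) ^ n := by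
          rw [← norm_inv]; exact poch_inv_le t hT n
        have i2 : ‖qPoch (t ^ 2) (t ^ 2) k‖⁻¹ ≤ ((1 - ‖t‖ ^ 2)⁻¹) ^ n := by
          rw [← norm_inv]
          exact le_trans (poch_inv_le t hT k) (pow_le_pow_right₀ hB1 hkn)
        calc ‖qPoch (t ^ 2) (t ^ 2) n‖⁻¹ * ‖qPoch (t ^ 2) (t ^ 2) k‖⁻¹
            ≤ ((1 - ‖t‖ ^ 2)⁻¹) ^ n * ((1 - ‖t‖ ^ 2)⁻¹) ^ n :=
              mul_le_mul i1 i2 (by positivity) (pow_nonneg hB0 n)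
          _ = (((1 - ‖t‖ ^ 2)⁻¹) ^ 2) ^ n := by rw [← pow_add, ← two_mul, pow_mul]
      rw [hnorm]
      calc ‖t‖ ^ ((n : ℤ) * ((n : ℤ) + 1) - (2 * (n : ℤ) + e) * (e - r)) *
            (‖qPoch (t ^ 2) (t ^ 2) n‖⁻¹ * ‖qPoch (t ^ 2) (t ^ 2) k‖⁻¹)
          ≤ (‖t‖ ^ ((n:ℤ) * n + (-(2 * |r|)) * n) * ‖t‖ ^ (e * e + |r| * e)) *
            ((((1 - ‖t‖ ^ 2)⁻¹) ^ 2) ^ n) := by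
            apply mul_le_mul hzle hinv (by positivity)
              (mul_nonneg (zpow_nonneg (norm_nonneg t) _) (zpow_nonneg (norm_nonneg t) _))
        _ = v n * ‖t‖ ^ (e * e + |r| * e) := by rw [hv]; ring
  have hSb : Summable (fun n => v n * ‖t‖ ^ (e * e + |r| * e)) :=
    (summable_v t ht hT r).mul_right _
  have hSt : Summable (fun n => ‖τ n‖) :=
    Summable.of_nonneg_of_le (fun n => norm_nonneg _) hbnd hSb
  have h1 : Itet t (e - r) e = ∑' n, τ n := rfl
  rw [h1]
  calc ‖∑' n, τ n‖ ≤ ∑' n, ‖τ n‖ := norm_tsum_le_tsum_norm hSt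
    _ ≤ ∑' n, v n * ‖t‖ ^ (e * e + |r| * e) := Summable.tsum_le_tsum hbnd hSt hSb
    _ = CC t r * ‖t‖ ^ (e * e + |r| * e) := by rw [tsum_mul_right, CC]

lemma ray_summable (t : ℂ) (ht : t ≠ 0) (hT : ‖t‖ < 1) (r a : ℤ) (ha : a ≤ 0) :
    Summable (fun k : ℕ => (-1 : ℂ) ^ (a - (k:ℤ)) * Itet t ((a - (k:ℤ)) - r) (a - (k:ℤ))) := by
  have hTpos : (0:ℝ) < ‖t‖ := norm_pos_iff.mpr ht
  have hne := ne_of_gt hTpos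
  apply Summable.of_norm
  have hgs : Summable (fun k : ℕ =>
      (CC t r * ‖t‖ ^ (a * a + |r| * a)) * ((1:ℝ) ^ k * ‖t‖ ^ ((k:ℤ) * k + (-2 * a - |r|) * k))) :=
    (masterZ t ht hT 1 zero_le_one (-2 * a - |r|)).mul_left _
  refine Summable.of_nonneg_of_le (fun k => norm_nonneg _) (fun k => ?_) hgs
  have h1 : ‖(-1 : ℂ) ^ (a - (k:ℤ)) * Itet t ((a - (k:ℤ)) - r) (a - (k:ℤ))‖
      = ‖Itet t ((a - (k:ℤ)) - r) (a - (k:ℤ))‖ := by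
    rw [norm_mul, norm_zpow, norm_neg, norm_one, one_zpow, one_mul]
  rw [h1]
  have h2 := Itet_bound t ht hT r (a - (k:ℤ)) (by omega)
  have h3 : (a - (k:ℤ)) * (a - (k:ℤ)) + |r| * (a - (k:ℤ))
      = ((k:ℤ) * k + (-2 * a - |r|) * k) + (a * a + |r| * a) := by ring
  rw [h3] at h2
  calc ‖Itet t ((a - (k:ℤ)) - r) (a - (k:ℤ))‖
      ≤ CC t r * ‖t‖ ^ (((k:ℤ) * k + (-2 * a - |r|) * k) + (a * a + |r| * a)) := h2
    _ = (CC t r * ‖t‖ ^ (a * a + |r| * a)) * ((1:ℝ) ^ k * ‖t‖ ^ ((k:ℤ) * k + (-2 * a - |r|) * k)) := by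
        rw [zpow_add₀ hne, one_pow]
        ring

end Stmt7

open Stmt7 in
/-- For every odd integer `r`, `Σ_{e ∈ ℤ} (−1)^e · I_Δ(e−r, e) = 0` (absolutely convergent). -/
theorem stmt_7 (t : ℂ) (ht0 : 0 < ‖t‖) (ht1 : ‖t‖ < 1)
    (r : ℤ) (hr : Odd r) :
    Summable (fun e : ℤ => (-1 : ℂ) ^ e * Itet t (e - r) e) ∧
      ∑' e : ℤ, (-1 : ℂ) ^ e * Itet t (e - r) e = 0 := by
  have ht : t ≠ 0 := by
    intro h
    rw [h] at ht0
    simp at ht0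
  have hT : ‖t‖ < 1 := by exact ht1
  set f : ℤ → ℂ := fun e => (-1 : ℂ) ^ e * Itet t (e - r) e with hf
  have key : ∀ e : ℤ, f (r - e) = - f e := by
    intro e
    have hdual : Itet t (e - r) e = Itet t (-e) (r - e) := by
      have h := Itet_dual t ht hT (e - r) e
      rw [show -(e - r) = r - e by ring] at h
      exact h
    have hm1 : (-1 : ℂ) ≠ 0 := by norm_num
    have h5 : (-1 : ℂ) ^ e * (-1 : ℂ) ^ e = 1 := by
      rw [← zpow_add₀ hm1, show e + e = 2 * e by ring, zpow_mul]
      norm_num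
    have hsgn : (-1 : ℂ) ^ (r - e) = -(-1 : ℂ) ^ e := by
      rw [zpow_sub₀ hm1, Odd.neg_one_zpow hr, div_eq_iff (zpow_ne_zero _ hm1)]
      linear_combination h5
    show (-1 : ℂ) ^ (r - e) * Itet t ((r - e) - r) (r - e) = -((-1 : ℂ) ^ e * Itet t (e - r) e)
    rw [show (r - e) - r = -e by ring, hsgn, hdual]
    ring
  have hneg : Summable (fun n : ℕ => f (-(n : ℤ))) := by
    have h := ray_summable t ht hT r 0 le_rfl
    exact h.congr (fun k => by rw [zero_sub])
  have hpos0 : Summable (fun n : ℕ => f (r - (n : ℤ))) := by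
    apply (summable_nat_add_iff r.toNat).mp
    have base := ray_summable t ht hT r (r - (r.toNat : ℤ)) (by omega)
    exact base.congr (fun k => by
      rw [show (r - (r.toNat : ℤ)) - (k : ℤ) = r - ((k + r.toNat : ℕ) : ℤ) by push_cast; ring])
  have hposN : Summable (fun n : ℕ => f ((n : ℤ))) := by
    apply hpos0.neg.congr
    intro n
    rw [key ((n : ℤ)), neg_neg]
  have hSf : Summable f := Summable.of_nat_of_neg hposN hneg
  refine ⟨hSf, ?_⟩
  have h1 : ∑' e : ℤ, f e = ∑' e : ℤ, f ((Equiv.subLeft r) e) :=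
    ((Equiv.subLeft r).tsum_eq f).symm
  simp only [Equiv.subLeft_apply] at h1
  have h2 : ∑' e : ℤ, f (r - e) = ∑' e : ℤ, - f e := tsum_congr key
  rw [tsum_neg] at h2
  exact add_self_eq_zero.mp (eq_neg_iff_add_eq_zero.mp (h1.trans h2))
end

section
/- For all nonzero complex numbers u and v, S_q(u) · C_q(v) − C_q(u) · S_q(v) = ((u−v)/(1−q)) · Σ_{n ≥ 0} (−1)^n · q^(n(n−1)/2) · (u⁻¹·v·q; q)_n · (u·v⁻¹·q; q)_n · (−u·v·q)^n / ( (−q;q)_n · (t³;q)_n · (−t³;q)_n · (q;q)_n ), where the series on the right converges absolutely. -/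
open scoped BigOperators

namespace QTrig
open Finset

lemma qPoch_zero (a q : ℂ) : qPoch a q 0 = 1 := Finset.prod_range_zero _

lemma qPoch_succ (a q : ℂ) (n : ℕ) : qPoch a q (n+1) = qPoch a q n * (1 - a * q ^ n) :=
  Finset.prod_range_succ _ _

lemma one_sub_ne {a q : ℂ} (ha : ‖a‖ < 1) (hq : ‖q‖ ≤ 1) (k : ℕ) : (1 : ℂ) - a * q ^ k ≠ 0 := by
  intro h
  have h1 : a * q ^ k = 1 := by linear_combination -h
  have : ‖a * q ^ k‖ < 1 := by
    rw [norm_mul, norm_pow]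
    calc ‖a‖ * ‖q‖ ^ k ≤ ‖a‖ * 1 := by
          gcongr
          exact pow_le_one₀ (norm_nonneg q) hq
      _ < 1 := by simpa using ha
  rw [h1] at this; simp at this

lemma qPoch_ne_zero {a q : ℂ} (ha : ‖a‖ < 1) (hq : ‖q‖ ≤ 1) (n : ℕ) : qPoch a q n ≠ 0 := by
  unfold qPoch
  exact Finset.prod_ne_zero_iff.mpr fun i _ => one_sub_ne ha hq i

lemma norm_qPoch_le (a q : ℂ) (hq : ‖q‖ ≤ 1) (n : ℕ) : ‖qPoch a q n‖ ≤ (1 + ‖a‖) ^ n := by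
  unfold qPoch
  rw [norm_prod]
  calc ∏ i ∈ Finset.range n, ‖(1:ℂ) - a * q ^ i‖ ≤ ∏ i ∈ Finset.range n, (1 + ‖a‖) := by
        apply Finset.prod_le_prod (fun i _ => norm_nonneg _)
        intro i _
        calc ‖(1:ℂ) - a * q ^ i‖ ≤ ‖(1:ℂ)‖ + ‖a * q ^ i‖ := norm_sub_le _ _
          _ ≤ 1 + ‖a‖ := by
              rw [norm_one, norm_mul, norm_pow]
              gcongr
              calc ‖a‖ * ‖q‖ ^ i ≤ ‖a‖ * 1 := by
                    gcongr; exact pow_le_one₀ (norm_nonneg q) hq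
                _ = ‖a‖ := mul_one _
    _ = (1 + ‖a‖) ^ n := by rw [Finset.prod_const, Finset.card_range]

lemma le_norm_qPoch (a q : ℂ) (ha : ‖a‖ ≤ 1) (hq : ‖q‖ ≤ 1) (n : ℕ) :
    (1 - ‖a‖) ^ n ≤ ‖qPoch a q n‖ := by
  unfold qPoch
  rw [norm_prod]
  calc (1 - ‖a‖) ^ n = ∏ i ∈ Finset.range n, (1 - ‖a‖) := by
        rw [Finset.prod_const, Finset.card_range]
    _ ≤ ∏ i ∈ Finset.range n, ‖(1:ℂ) - a * q ^ i‖ := by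
        apply Finset.prod_le_prod (fun i _ => by linarith)
        intro i _
        have h1 : ‖a * q ^ i‖ ≤ ‖a‖ := by
          rw [norm_mul, norm_pow]
          calc ‖a‖ * ‖q‖ ^ i ≤ ‖a‖ * 1 := by
                gcongr; exact pow_le_one₀ (norm_nonneg q) hq
            _ = ‖a‖ := mul_one _
        calc 1 - ‖a‖ ≤ ‖(1:ℂ)‖ - ‖a * q ^ i‖ := by rw [norm_one]; linarith
          _ ≤ ‖(1:ℂ) - a * q ^ i‖ := norm_sub_norm_le _ _

lemma tri_succ (n : ℕ) : (n+1) * n / 2 = n * (n-1) / 2 + n := by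
  cases n with
  | zero => rfl
  | succ k =>
    rw [Nat.succ_sub_one]
    rw [show (k+1+1) * (k+1) = (k+1) * k + (k+1) * 2 by ring]
    rw [Nat.add_mul_div_right _ _ (by norm_num : (0:ℕ) < 2)]

lemma summable_aux {C r : ℝ} (hC : 0 ≤ C) (hr0 : 0 ≤ r) (hr1 : r < 1) :
    Summable (fun n : ℕ => C ^ n * r ^ (n * (n-1) / 2)) := by
  apply summable_of_ratio_norm_eventually_le (r := 1/2) (by norm_num)
  have h : Filter.Tendsto (fun n : ℕ => C * r ^ n) Filter.atTop (nhds 0) := by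
    simpa using (tendsto_pow_atTop_nhds_zero_of_lt_one hr0 hr1).const_mul C
  have h2 : ∀ᶠ n : ℕ in Filter.atTop, C * r ^ n ≤ 1/2 := by
    filter_upwards [h.eventually (gt_mem_nhds (by norm_num : (0:ℝ) < 1/2))] with n hn
    exact le_of_lt hn
  filter_upwards [h2] with n hn
  rw [Real.norm_of_nonneg (by positivity), Real.norm_of_nonneg (by positivity)]
  rw [show (n+1) * ((n+1) - 1) / 2 = n * (n-1)/2 + n by simpa using tri_succ n]
  have e : C ^ (n+1) * r ^ (n * (n-1)/2 + n) = (C * r ^ n) * (C ^ n * r ^ (n*(n-1)/2)) := by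
    rw [pow_add, pow_succ]; ring
  rw [e]
  exact mul_le_mul_of_nonneg_right hn (by positivity)


noncomputable def sc (t : ℂ) (m : ℕ) : ℂ :=
  (-1 : ℂ) ^ m * (t ^ 2) ^ (m * (m + 1)) / qPoch (t ^ 2) (t ^ 2) (2 * m + 1)

noncomputable def cc (t : ℂ) (n : ℕ) : ℂ :=
  (-1 : ℂ) ^ n * (t ^ 2) ^ (n ^ 2) / qPoch (t ^ 2) (t ^ 2) (2 * n)

variable {t : ℂ}

lemma hq1 (h1 : ‖t‖ < 1) : ‖t ^ 2‖ < 1 := by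
  rw [norm_pow]
  calc ‖t‖ ^ 2 ≤ ‖t‖ := by nlinarith [norm_nonneg t, h1]
    _ < 1 := h1

lemma hq1' (h1 : ‖t‖ < 1) : ‖t ^ 2‖ ≤ 1 := le_of_lt (hq1 h1)

variable (h1 : ‖t‖ < 1)
include h1

lemma L1 (j : ℕ) :
    (1 - (t^2) ^ (2*j+2)) * (1 - (t^2) ^ (2*j+3)) * sc t (j+1) = -((t^2) ^ (2*j+2)) * sc t j := by
  have hp := qPoch_ne_zero (q := t^2) (hq1 h1) (hq1' h1) (2*j+1)
  have h2 : qPoch (t^2) (t^2) (2*(j+1)+1) =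
      qPoch (t^2) (t^2) (2*j+1) * (1 - t^2 * (t^2)^(2*j+1)) * (1 - t^2 * (t^2)^(2*j+2)) := by
    rw [show 2*(j+1)+1 = (2*j+1)+1+1 by ring, qPoch_succ, qPoch_succ]
  have hf1 := one_sub_ne (q := t^2) (hq1 h1) (hq1' h1) (2*j+1)
  have hf2 := one_sub_ne (q := t^2) (hq1 h1) (hq1' h1) (2*j+2)
  unfold sc
  rw [h2]
  rw [← mul_div_assoc, ← mul_div_assoc]
  rw [div_eq_div_iff (by exact mul_ne_zero (mul_ne_zero hp hf1) hf2) hp]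
  ring

lemma L2 (j : ℕ) :
    (1 - (t^2) ^ (2*j+1)) * (1 - (t^2) ^ (2*j+2)) * cc t (j+1) = -((t^2) ^ (2*j+1)) * cc t j := by
  have hp := qPoch_ne_zero (q := t^2) (hq1 h1) (hq1' h1) (2*j)
  have hf1 := one_sub_ne (q := t^2) (hq1 h1) (hq1' h1) (2*j)
  have hf2 := one_sub_ne (q := t^2) (hq1 h1) (hq1' h1) (2*j+1)
  have h2 : qPoch (t^2) (t^2) (2*(j+1)) =
      qPoch (t^2) (t^2) (2*j) * (1 - t^2 * (t^2)^(2*j)) * (1 - t^2 * (t^2)^(2*j+1)) := by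
    rw [show 2*(j+1) = (2*j)+1+1 by ring, qPoch_succ, qPoch_succ]
  unfold cc
  rw [h2]
  rw [← mul_div_assoc, ← mul_div_assoc]
  rw [div_eq_div_iff (by exact mul_ne_zero (mul_ne_zero hp hf1) hf2) hp]
  ring

lemma L3 (j n : ℕ) :
    (t^2) ^ (j+n+1) * sc t n * cc t j =
      -((1 - (t^2) ^ (2*j+1)) * (1 - (t^2) ^ (2*n+2))) * sc t j * cc t (n+1) := by
  have hpn := qPoch_ne_zero (q := t^2) (hq1 h1) (hq1' h1) (2*n+1)
  have hpj := qPoch_ne_zero (q := t^2) (hq1 h1) (hq1' h1) (2*j)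
  have hf1 := one_sub_ne (q := t^2) (hq1 h1) (hq1' h1) (2*j)
  have hf2 := one_sub_ne (q := t^2) (hq1 h1) (hq1' h1) (2*n+1)
  have h2 : qPoch (t^2) (t^2) (2*j+1) = qPoch (t^2) (t^2) (2*j) * (1 - t^2 * (t^2)^(2*j)) :=
    qPoch_succ _ _ _
  have h3 : qPoch (t^2) (t^2) (2*(n+1)) = qPoch (t^2) (t^2) (2*n+1) * (1 - t^2 * (t^2)^(2*n+1)) := by
    rw [show 2*(n+1) = (2*n+1)+1 by ring, qPoch_succ]
  unfold sc cc
  rw [h2, h3]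
  field_simp
  ring

lemma lemA (x y : ℂ) (N : ℕ) :
    (1 - (t^2)^(2*N+2)) * (1 - (t^2)^(2*N+3)) *
      ∑ m ∈ Finset.range (N+2), sc t m * cc t (N+1-m) * x^(2*m+1) * y^(2*(N+1-m)) =
    -((t^2)^(2*N+2)) * (x^2 + y^2) *
      (∑ j ∈ Finset.range (N+1), sc t j * cc t (N-j) * x^(2*j+1) * y^(2*(N-j)))
    - (t^2)^(N+1) * (1 + (t^2)^(2*N+2)) * (x*y) *
      (∑ j ∈ Finset.range (N+1), cc t j * sc t (N-j) * x^(2*j) * y^(2*(N-j)+1)) := by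
  have split : (1 - (t^2)^(2*N+2)) * (1 - (t^2)^(2*N+3)) *
      ∑ m ∈ Finset.range (N+2), sc t m * cc t (N+1-m) * x^(2*m+1) * y^(2*(N+1-m)) =
      (∑ m ∈ Finset.range (N+2), (t^2)^(2*(N+1-m)) * (1-(t^2)^(2*m)) * (1-(t^2)^(2*m+1)) *
        (sc t m * cc t (N+1-m) * x^(2*m+1) * y^(2*(N+1-m))))
      + ∑ m ∈ Finset.range (N+2),
          ((1-(t^2)^(2*N+2)) * (1-(t^2)^(2*N+3))
            - (t^2)^(2*(N+1-m)) * (1-(t^2)^(2*m)) * (1-(t^2)^(2*m+1))) *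
          (sc t m * cc t (N+1-m) * x^(2*m+1) * y^(2*(N+1-m))) := by
    rw [Finset.mul_sum, ← Finset.sum_add_distrib]
    exact Finset.sum_congr rfl fun m _ => by ring
  rw [split]
  have part1 : (∑ m ∈ Finset.range (N+2), (t^2)^(2*(N+1-m)) * (1-(t^2)^(2*m)) * (1-(t^2)^(2*m+1)) *
        (sc t m * cc t (N+1-m) * x^(2*m+1) * y^(2*(N+1-m)))) =
      -((t^2)^(2*N+2)) * x^2 *
        (∑ j ∈ Finset.range (N+1), sc t j * cc t (N-j) * x^(2*j+1) * y^(2*(N-j))) := by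
    rw [Finset.sum_range_succ']
    simp only [Nat.sub_zero, pow_zero, mul_zero, zero_mul, sub_self, mul_one, add_zero]
    rw [Finset.mul_sum]
    refine (Finset.sum_congr rfl fun j hj => ?_).trans rfl
    rw [Finset.mem_range] at hj
    obtain ⟨k, rfl⟩ : ∃ k, N = j + k := ⟨N - j, by omega⟩
    have e1 : j + k + 1 - (j + 1) = k := by omega
    have e2 : j + k - j = k := by omega
    rw [e1, e2]
    linear_combination ((t^2)^(2*k) * cc t k * x^(2*(j+1)+1) * y^(2*k)) * (L1 h1 j)
  have part2 : (∑ m ∈ Finset.range (N+2),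
          ((1-(t^2)^(2*N+2)) * (1-(t^2)^(2*N+3))
            - (t^2)^(2*(N+1-m)) * (1-(t^2)^(2*m)) * (1-(t^2)^(2*m+1))) *
          (sc t m * cc t (N+1-m) * x^(2*m+1) * y^(2*(N+1-m)))) =
      -((t^2)^(2*N+2)) * y^2 *
        (∑ j ∈ Finset.range (N+1), sc t j * cc t (N-j) * x^(2*j+1) * y^(2*(N-j)))
      - (t^2)^(N+1) * (1 + (t^2)^(2*N+2)) * (x*y) *
        (∑ j ∈ Finset.range (N+1), cc t j * sc t (N-j) * x^(2*j) * y^(2*(N-j)+1)) := by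
    rw [Finset.sum_range_succ]
    have hlast : ((1-(t^2)^(2*N+2)) * (1-(t^2)^(2*N+3))
            - (t^2)^(2*(N+1-(N+1))) * (1-(t^2)^(2*(N+1))) * (1-(t^2)^(2*(N+1)+1))) *
          (sc t (N+1) * cc t (N+1-(N+1)) * x^(2*(N+1)+1) * y^(2*(N+1-(N+1)))) = 0 := by
      rw [Nat.sub_self]
      ring_nf
    rw [hlast, add_zero, Finset.mul_sum, Finset.mul_sum, ← Finset.sum_sub_distrib]
    refine Finset.sum_congr rfl fun j hj => ?_
    rw [Finset.mem_range] at hj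
    obtain ⟨k, rfl⟩ : ∃ k, N = j + k := ⟨N - j, by omega⟩
    have e1 : j + k + 1 - j = k + 1 := by omega
    have e2 : j + k - j = k := by omega
    rw [e1, e2]
    linear_combination ((t^2)^(2*j+1) * sc t j * x^(2*j+1) * y^(2*(k+1))) * (L2 h1 k)
      + ((1 + (t^2)^(2*(j+k)+2)) * x^(2*j+1) * y^(2*(k+1))) * (L3 h1 j k)
  rw [part1, part2]
  ring

noncomputable def Ff (t u v : ℂ) (n : ℕ) : ℂ :=
  (-1 : ℂ) ^ n * (t ^ 2) ^ (n * (n - 1) / 2) *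
    qPoch (u⁻¹ * v * t ^ 2) (t ^ 2) n * qPoch (u * v⁻¹ * t ^ 2) (t ^ 2) n *
      (-(u * v * t ^ 2)) ^ n /
    (qPoch (-(t ^ 2)) (t ^ 2) n * qPoch (t ^ 3) (t ^ 2) n * qPoch (-(t ^ 3)) (t ^ 2) n *
      qPoch (t ^ 2) (t ^ 2) n)


variable {u v : ℂ}

omit h1 in
lemma hq3 (h1 : ‖t‖ < 1) : ‖t ^ 3‖ < 1 := by
  rw [norm_pow]
  have h0 := norm_nonneg t
  calc ‖t‖ ^ 3 ≤ ‖t‖ := by nlinarith [mul_nonneg h0 h0, mul_nonneg (mul_nonneg h0 h0) h0]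
    _ < 1 := h1

lemma Frec (hu : u ≠ 0) (hv : v ≠ 0) (N : ℕ) :
    (1 - (t^2)^(2*N+2)) * (1 - (t^2)^(2*N+3)) * Ff t u v (N+1)
      = (t^2)^(N+1) * (u - v*(t^2)^(N+1)) * (v - u*(t^2)^(N+1)) * Ff t u v N := by
  have hnq : ‖-(t^2)‖ < 1 := by rw [norm_neg]; exact hq1 h1
  have hnq3 : ‖-(t^3)‖ < 1 := by rw [norm_neg]; exact hq3 h1
  have hd1 := qPoch_ne_zero (a := -(t^2)) (q := t^2) hnq (hq1' h1) N
  have hd2 := qPoch_ne_zero (a := t^3) (q := t^2) (hq3 h1) (hq1' h1) N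
  have hd3 := qPoch_ne_zero (a := -(t^3)) (q := t^2) hnq3 (hq1' h1) N
  have hd4 := qPoch_ne_zero (a := t^2) (q := t^2) (hq1 h1) (hq1' h1) N
  have hf1 := one_sub_ne (a := -(t^2)) (q := t^2) hnq (hq1' h1) N
  have hf2 := one_sub_ne (a := t^3) (q := t^2) (hq3 h1) (hq1' h1) N
  have hf3 := one_sub_ne (a := -(t^3)) (q := t^2) hnq3 (hq1' h1) N
  have hf4 := one_sub_ne (a := t^2) (q := t^2) (hq1 h1) (hq1' h1) N
  unfold Ff
  rw [qPoch_succ, qPoch_succ, qPoch_succ, qPoch_succ, qPoch_succ, qPoch_succ]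
  have hexp : ((t:ℂ)^2) ^ ((N+1) * ((N+1) - 1) / 2) = (t^2)^(N * (N-1)/2) * (t^2)^N := by
    rw [Nat.add_sub_cancel, tri_succ, pow_add]
  rw [hexp]
  rw [← mul_div_assoc, ← mul_div_assoc]
  rw [div_eq_div_iff
    (by exact mul_ne_zero (mul_ne_zero (mul_ne_zero (mul_ne_zero hd1 hf1) (mul_ne_zero hd2 hf2))
      (mul_ne_zero hd3 hf3)) (mul_ne_zero hd4 hf4))
    (by exact mul_ne_zero (mul_ne_zero (mul_ne_zero hd1 hd2) hd3) hd4)]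
  field_simp
  ring

lemma key (hu : u ≠ 0) (hv : v ≠ 0) : ∀ N : ℕ,
    (∑ m ∈ Finset.range (N+1), sc t m * cc t (N-m) * u^(2*m+1) * v^(2*(N-m)))
      - (∑ m ∈ Finset.range (N+1), cc t m * sc t (N-m) * u^(2*m) * v^(2*(N-m)+1))
      = ((u - v) / (1 - t^2)) * Ff t u v N := by
  intro N
  induction N with
  | zero =>
    have hne : (1:ℂ) - t^2 ≠ 0 := by
      have h := one_sub_ne (a := t^2) (q := t^2) (hq1 h1) (hq1' h1) 0
      simpa using h
    have h01 : qPoch (t^2) (t^2) 1 = 1 - t^2 := by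
      rw [qPoch_succ, qPoch_zero]; ring
    simp [sc, cc, Ff, qPoch_zero, h01, Finset.sum_range_one]
    field_simp
  | succ N ih =>
    have hD1 : (1:ℂ) - (t^2)^(2*N+2) ≠ 0 := by
      have h := one_sub_ne (a := t^2) (q := t^2) (hq1 h1) (hq1' h1) (2*N+1)
      intro hc; apply h; rw [← hc]; ring
    have hD2 : (1:ℂ) - (t^2)^(2*N+3) ≠ 0 := by
      have h := one_sub_ne (a := t^2) (q := t^2) (hq1 h1) (hq1' h1) (2*N+2)
      intro hc; apply h; rw [← hc]; ring
    -- reflection of the B-sum at level N+1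
    have hB' : (∑ m ∈ Finset.range (N+2), cc t m * sc t (N+1-m) * u^(2*m) * v^(2*(N+1-m)+1))
        = ∑ m ∈ Finset.range (N+2), sc t m * cc t (N+1-m) * v^(2*m+1) * u^(2*(N+1-m)) := by
      rw [← Finset.sum_range_reflect]
      refine Finset.sum_congr rfl fun m hm => ?_
      rw [Finset.mem_range] at hm
      have e1 : N + 2 - 1 - m = N + 1 - m := by omega
      have e2 : N + 1 - (N + 1 - m) = m := by omega
      rw [e1, e2]; ring
    -- reflections at level N for the swapped lemA
    have hRA : (∑ j ∈ Finset.range (N+1), sc t j * cc t (N-j) * v^(2*j+1) * u^(2*(N-j)))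
        = ∑ m ∈ Finset.range (N+1), cc t m * sc t (N-m) * u^(2*m) * v^(2*(N-m)+1) := by
      rw [← Finset.sum_range_reflect]
      refine Finset.sum_congr rfl fun m hm => ?_
      rw [Finset.mem_range] at hm
      have e1 : N + 1 - 1 - m = N - m := by omega
      have e2 : N - (N - m) = m := by omega
      rw [e1, e2]; ring
    have hRB : (∑ j ∈ Finset.range (N+1), cc t j * sc t (N-j) * v^(2*j) * u^(2*(N-j)+1))
        = ∑ m ∈ Finset.range (N+1), sc t m * cc t (N-m) * u^(2*m+1) * v^(2*(N-m)) := by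
      rw [← Finset.sum_range_reflect]
      refine Finset.sum_congr rfl fun m hm => ?_
      rw [Finset.mem_range] at hm
      have e1 : N + 1 - 1 - m = N - m := by omega
      have e2 : N - (N - m) = m := by omega
      rw [e1, e2]; ring
    have hA := lemA h1 u v N
    have hB := lemA h1 v u N
    rw [hRA, hRB] at hB
    have hFr := Frec h1 hu hv N
    apply mul_left_cancel₀ (mul_ne_zero hD1 hD2)
    rw [hB']
    linear_combination hA - hB + ((t:ℂ)^2)^(N+1) * (u - v*(t^2)^(N+1)) * (v - u*(t^2)^(N+1)) * ih
      - ((u - v) / (1 - t^2)) * hFr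

omit h1 in
lemma expo_le (n : ℕ) : n * (n-1) / 2 ≤ n * (n+1) :=
  le_trans (Nat.div_le_self _ _) (Nat.mul_le_mul_left _ (by omega))

omit h1 in
lemma expo_le' (n : ℕ) : n * (n-1) / 2 ≤ n ^ 2 := by
  calc n * (n-1) / 2 ≤ n * (n-1) := Nat.div_le_self _ _
    _ ≤ n ^ 2 := by rw [pow_two]; exact Nat.mul_le_mul_left _ (by omega)

omit h1 in
lemma sum_s (h1 : ‖t‖ < 1) (z : ℂ) : Summable (fun n => ‖sc t n * z^(2*n+1)‖) := by
  have hq1h := hq1 h1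
  have hd : 0 < 1 - ‖(t:ℂ)^2‖ := by linarith
  have hq0 : (0:ℝ) ≤ ‖(t:ℂ)^2‖ := norm_nonneg _
  apply Summable.of_nonneg_of_le (fun n => norm_nonneg _) ?_
    ((summable_aux (C := ‖z‖^2/(1 - ‖(t:ℂ)^2‖)^2) (by positivity) hq0 hq1h).mul_left
      (‖z‖/(1 - ‖(t:ℂ)^2‖)))
  intro n
  have hplow := le_norm_qPoch (t^2) (t^2) (hq1' h1) (hq1' h1) (2*n+1)
  have hppos : (0:ℝ) < ‖qPoch (t^2) (t^2) (2*n+1)‖ := by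
    have h := qPoch_ne_zero (a := t^2) (q := t^2) hq1h (hq1' h1) (2*n+1)
    exact norm_pos_iff.mpr h
  calc ‖sc t n * z^(2*n+1)‖
      = ‖(t:ℂ)^2‖^(n*(n+1)) * ‖z‖^(2*n+1) / ‖qPoch (t^2) (t^2) (2*n+1)‖ := by
        simp [sc, norm_mul, norm_div, norm_pow]
        ring
    _ ≤ ‖(t:ℂ)^2‖^(n*(n-1)/2) * ‖z‖^(2*n+1) / (1 - ‖(t:ℂ)^2‖)^(2*n+1) := by
        apply div_le_div₀ (by positivity) ?_ (by positivity) hplow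
        exact mul_le_mul_of_nonneg_right
          (pow_le_pow_of_le_one hq0 (hq1' h1) (expo_le n)) (by positivity)
    _ = (‖z‖/(1 - ‖(t:ℂ)^2‖)) *
          ((‖z‖^2/(1 - ‖(t:ℂ)^2‖)^2)^n * ‖(t:ℂ)^2‖^(n*(n-1)/2)) := by
        rw [div_pow, ← pow_mul, ← pow_mul]
        field_simp
        ring

omit h1 in
lemma sum_c (h1 : ‖t‖ < 1) (z : ℂ) : Summable (fun n => ‖cc t n * z^(2*n)‖) := by
  have hq1h := hq1 h1
  have hd : 0 < 1 - ‖(t:ℂ)^2‖ := by linarith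
  have hq0 : (0:ℝ) ≤ ‖(t:ℂ)^2‖ := norm_nonneg _
  apply Summable.of_nonneg_of_le (fun n => norm_nonneg _) ?_
    ((summable_aux (C := ‖z‖^2/(1 - ‖(t:ℂ)^2‖)^2) (by positivity) hq0 hq1h).mul_left 1)
  intro n
  have hplow := le_norm_qPoch (t^2) (t^2) (hq1' h1) (hq1' h1) (2*n)
  have hppos : (0:ℝ) < ‖qPoch (t^2) (t^2) (2*n)‖ := by
    have h := qPoch_ne_zero (a := t^2) (q := t^2) hq1h (hq1' h1) (2*n)
    exact norm_pos_iff.mpr h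
  calc ‖cc t n * z^(2*n)‖
      = ‖(t:ℂ)^2‖^(n^2) * ‖z‖^(2*n) / ‖qPoch (t^2) (t^2) (2*n)‖ := by
        simp [cc, norm_mul, norm_div, norm_pow]
        ring
    _ ≤ ‖(t:ℂ)^2‖^(n*(n-1)/2) * ‖z‖^(2*n) / (1 - ‖(t:ℂ)^2‖)^(2*n) := by
        apply div_le_div₀ (by positivity) ?_ (by positivity) hplow
        exact mul_le_mul_of_nonneg_right
          (pow_le_pow_of_le_one hq0 (hq1' h1) (expo_le' n)) (by positivity)
    _ = 1 * ((‖z‖^2/(1 - ‖(t:ℂ)^2‖)^2)^n * ‖(t:ℂ)^2‖^(n*(n-1)/2)) := by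
        rw [div_pow, ← pow_mul, ← pow_mul]
        field_simp

omit h1 in
lemma sum_F (h1 : ‖t‖ < 1) : Summable (fun n => ‖Ff t u v n‖) := by
  have hq1h := hq1 h1
  have hq3h := hq3 h1
  have hd : 0 < 1 - ‖(t:ℂ)^2‖ := by linarith
  have he : 0 < 1 - ‖(t:ℂ)^3‖ := by linarith
  have hq0 : (0:ℝ) ≤ ‖(t:ℂ)^2‖ := norm_nonneg _
  apply Summable.of_nonneg_of_le (fun n => norm_nonneg _) ?_
    ((summable_aux
      (C := (1+‖u⁻¹*v*t^2‖) * (1+‖u*v⁻¹*t^2‖) * ‖u*v*t^2‖ /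
        ((1 - ‖(t:ℂ)^2‖)^2 * (1 - ‖(t:ℂ)^3‖)^2))
      (by positivity) hq0 hq1h).mul_left 1)
  intro n
  have hp1 := le_norm_qPoch (-(t^2)) (t^2) (by rw [norm_neg]; exact hq1' h1) (hq1' h1) n
  have hp2 := le_norm_qPoch (t^3) (t^2) (le_of_lt hq3h) (hq1' h1) n
  have hp3 := le_norm_qPoch (-(t^3)) (t^2) (by rw [norm_neg]; exact le_of_lt hq3h) (hq1' h1) n
  have hp4 := le_norm_qPoch (t^2) (t^2) (hq1' h1) (hq1' h1) n
  rw [norm_neg] at hp1 hp3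
  have hn1 := qPoch_ne_zero (a := -(t^2)) (q := t^2) (by rw [norm_neg]; exact hq1h) (hq1' h1) n
  have hn2 := qPoch_ne_zero (a := t^3) (q := t^2) hq3h (hq1' h1) n
  have hn3 := qPoch_ne_zero (a := -(t^3)) (q := t^2) (by rw [norm_neg]; exact hq3h) (hq1' h1) n
  have hn4 := qPoch_ne_zero (a := t^2) (q := t^2) hq1h (hq1' h1) n
  have hq1u := norm_qPoch_le (u⁻¹ * v * t^2) (t^2) (hq1' h1) n
  have hq1v := norm_qPoch_le (u * v⁻¹ * t^2) (t^2) (hq1' h1) n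
  have hden : (1 - ‖(t:ℂ)^2‖)^n * (1 - ‖(t:ℂ)^3‖)^n * (1 - ‖(t:ℂ)^3‖)^n * (1 - ‖(t:ℂ)^2‖)^n
      ≤ ‖qPoch (-(t^2)) (t^2) n * qPoch (t^3) (t^2) n * qPoch (-(t^3)) (t^2) n *
          qPoch (t^2) (t^2) n‖ := by
    rw [norm_mul, norm_mul, norm_mul]
    gcongr <;> positivity
  calc ‖Ff t u v n‖
      = ‖(t:ℂ)^2‖^(n*(n-1)/2) * ‖qPoch (u⁻¹ * v * t^2) (t^2) n‖ *
          ‖qPoch (u * v⁻¹ * t^2) (t^2) n‖ * ‖u*v*t^2‖^n /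
          ‖qPoch (-(t^2)) (t^2) n * qPoch (t^3) (t^2) n * qPoch (-(t^3)) (t^2) n *
            qPoch (t^2) (t^2) n‖ := by
        unfold Ff
        rw [norm_div]
        congr 1
        rw [norm_mul, norm_mul, norm_mul, norm_mul, norm_pow, norm_pow, norm_pow, norm_neg]
        norm_num
    _ ≤ ‖(t:ℂ)^2‖^(n*(n-1)/2) * (1+‖u⁻¹*v*t^2‖)^n * (1+‖u*v⁻¹*t^2‖)^n * ‖u*v*t^2‖^n /
          ((1 - ‖(t:ℂ)^2‖)^n * (1 - ‖(t:ℂ)^3‖)^n * (1 - ‖(t:ℂ)^3‖)^n * (1 - ‖(t:ℂ)^2‖)^n) := by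
        apply div_le_div₀ (by positivity) ?_ (by positivity) hden
        gcongr <;> positivity
    _ = 1 * (((1+‖u⁻¹*v*t^2‖) * (1+‖u*v⁻¹*t^2‖) * ‖u*v*t^2‖ /
          ((1 - ‖(t:ℂ)^2‖)^2 * (1 - ‖(t:ℂ)^3‖)^2))^n * ‖(t:ℂ)^2‖^(n*(n-1)/2)) := by
        have hz1 : ((1-‖(t:ℂ)^2‖)^n * (1-‖(t:ℂ)^3‖)^n * (1-‖(t:ℂ)^3‖)^n * (1-‖(t:ℂ)^2‖)^n)
            ≠ 0 := by positivity
        have hz2 : (((1-‖(t:ℂ)^2‖)^2 * (1-‖(t:ℂ)^3‖)^2)^n) ≠ 0 := by positivity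
        rw [one_mul, div_pow, div_mul_eq_mul_div, div_eq_div_iff hz1 hz2,
          mul_pow ((1-‖(t:ℂ)^2‖)^2) ((1-‖(t:ℂ)^3‖)^2), ← pow_mul, ← pow_mul,
          mul_pow ((1+‖u⁻¹*v*t^2‖) * (1+‖u*v⁻¹*t^2‖)) (‖u*v*t^2‖),
          mul_pow (1+‖u⁻¹*v*t^2‖) (1+‖u*v⁻¹*t^2‖)]
        ring


lemma final (hu : u ≠ 0) (hv : v ≠ 0) :
    Sq t u * Cq t v - Cq t u * Sq t v = ((u - v) / (1 - t ^ 2)) * ∑' n, Ff t u v n := by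
  have e1 : Sq t u = ∑' n, sc t n * u ^ (2*n+1) := by
    unfold Sq sc; exact tsum_congr fun n => by ring
  have e2 : Cq t v = ∑' n, cc t n * v ^ (2*n) := by
    unfold Cq cc; exact tsum_congr fun n => by ring
  have e3 : Cq t u = ∑' n, cc t n * u ^ (2*n) := by
    unfold Cq cc; exact tsum_congr fun n => by ring
  have e4 : Sq t v = ∑' n, sc t n * v ^ (2*n+1) := by
    unfold Sq sc; exact tsum_congr fun n => by ring
  have hsu := sum_s h1 u
  have hsv := sum_s h1 v
  have hcu := sum_c h1 u
  have hcv := sum_c h1 v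
  have hP1 := tsum_mul_tsum_eq_tsum_sum_range_of_summable_norm hsu hcv
  have hP2 := tsum_mul_tsum_eq_tsum_sum_range_of_summable_norm hcu hsv
  have hS1 : Summable (fun n => ∑ k ∈ Finset.range (n+1),
      (sc t k * u ^ (2*k+1)) * (cc t (n-k) * v ^ (2*(n-k)))) :=
    (summable_norm_sum_mul_range_of_summable_norm hsu hcv).of_norm
  have hS2 : Summable (fun n => ∑ k ∈ Finset.range (n+1),
      (cc t k * u ^ (2*k)) * (sc t (n-k) * v ^ (2*(n-k)+1))) :=
    (summable_norm_sum_mul_range_of_summable_norm hcu hsv).of_norm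
  calc Sq t u * Cq t v - Cq t u * Sq t v
      = (∑' n, ∑ k ∈ Finset.range (n+1), (sc t k * u ^ (2*k+1)) * (cc t (n-k) * v ^ (2*(n-k))))
        - (∑' n, ∑ k ∈ Finset.range (n+1),
            (cc t k * u ^ (2*k)) * (sc t (n-k) * v ^ (2*(n-k)+1))) := by
        rw [e1, e2, e3, e4, hP1, hP2]
    _ = ∑' n, ((∑ k ∈ Finset.range (n+1), (sc t k * u ^ (2*k+1)) * (cc t (n-k) * v ^ (2*(n-k))))
          - ∑ k ∈ Finset.range (n+1), (cc t k * u ^ (2*k)) * (sc t (n-k) * v ^ (2*(n-k)+1))) :=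
        (Summable.tsum_sub hS1 hS2).symm
    _ = ∑' n, ((u - v) / (1 - t ^ 2) * Ff t u v n) := by
        refine tsum_congr fun n => ?_
        have ha : (∑ k ∈ Finset.range (n+1), (sc t k * u ^ (2*k+1)) * (cc t (n-k) * v ^ (2*(n-k))))
            = ∑ k ∈ Finset.range (n+1), sc t k * cc t (n-k) * u ^ (2*k+1) * v ^ (2*(n-k)) :=
          Finset.sum_congr rfl fun k _ => by ring
        have hb : (∑ k ∈ Finset.range (n+1), (cc t k * u ^ (2*k)) * (sc t (n-k) * v ^ (2*(n-k)+1)))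
            = ∑ k ∈ Finset.range (n+1), cc t k * sc t (n-k) * u ^ (2*k) * v ^ (2*(n-k)+1) :=
          Finset.sum_congr rfl fun k _ => by ring
        rw [ha, hb]
        exact key h1 hu hv n
    _ = ((u - v) / (1 - t ^ 2)) * ∑' n, Ff t u v n := tsum_mul_left

end QTrig

/-- For nonzero `u, v`: `S_q(u)·C_q(v) − C_q(u)·S_q(v)` equals `(u−v)/(1−q)` times the
absolutely convergent basic hypergeometric series
`₃φ₃[0, u⁻¹vq, uv⁻¹q; −q, q^(3/2), −q^(3/2); q, −uvq]` written out termwise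
(with `q = t²`, `q^(3/2) = t³`). -/
theorem stmt_16 (t : ℂ) (ht0 : 0 < ‖t‖) (ht1 : ‖t‖ < 1)
    (u v : ℂ) (hu : u ≠ 0) (hv : v ≠ 0) :
    let f : ℕ → ℂ := fun n =>
      (-1 : ℂ) ^ n * (t ^ 2) ^ (n * (n - 1) / 2) *
        qPoch (u⁻¹ * v * t ^ 2) (t ^ 2) n * qPoch (u * v⁻¹ * t ^ 2) (t ^ 2) n *
          (-(u * v * t ^ 2)) ^ n /
        (qPoch (-(t ^ 2)) (t ^ 2) n * qPoch (t ^ 3) (t ^ 2) n * qPoch (-(t ^ 3)) (t ^ 2) n *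
          qPoch (t ^ 2) (t ^ 2) n)
    Summable f ∧
      Sq t u * Cq t v - Cq t u * Sq t v = ((u - v) / (1 - t ^ 2)) * ∑' n : ℕ, f n := by
  have h1 : ‖t‖ < 1 := by exact ht1
  intro f
  exact ⟨((QTrig.sum_F (u := u) (v := v) h1).of_norm), QTrig.final h1 hu hv⟩
end

section
/- Let ρ₀ > 0 be such that for every integer N ≥ 1 and every s ∈ ℂ with |s| = ρ₀·|q|^N, the three products (−q·s; q)_∞, (s/x; q)_∞ and (x/s²; q)_∞ are all nonzero (i.e. the circles |s| = ρ₀·|q|^N avoid the poles of ψ). Then the sequence of contour integrals (1/(2πi)) ∮_{|s| = ρ₀·|q|^N} ψ(s) · ds/s (over the positively oriented circle of radius ρ₀·|q|^N centred at 0) tends to 0 as N → ∞. -/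
open scoped BigOperators

/-- The infinite q-Pochhammer symbol `(a;q)_∞ = ∏_{i=0}^{∞} (1 − a·q^i)`. -/
noncomputable def qPochInf (a q : ℂ) : ℂ := ∏' i : ℕ, (1 - a * q ^ i)

/-- The meromorphic function `ψ(s) = ψ⁰(s, x/s)` built from the generating function of the
tetrahedral index:
`ψ(s) = c(q) · (1/s;q)_∞ (−qx/s;q)_∞ (−qs²/x;q)_∞ / ((−qs;q)_∞ (s/x;q)_∞ (x/s²;q)_∞)`,
where `c(q) = (q;q)_∞² / (q²;q²)_∞`. -/
noncomputable def psi0 (q x s : ℂ) : ℂ :=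
  (qPochInf q q ^ 2 / qPochInf (q ^ 2) (q ^ 2)) *
    (qPochInf (1 / s) q * qPochInf (-q * x / s) q * qPochInf (-q * s ^ 2 / x) q) /
    (qPochInf (-q * s) q * qPochInf (s / x) q * qPochInf (x / s ^ 2) q)

/-- Basic multipliability. -/
lemma mult_aux {q : ℂ} (hq : ‖q‖ < 1) (a : ℂ) :
    Multipliable (fun i : ℕ => 1 - a * q ^ i) := by
  by_cases hz : ∃ k, 1 - a * q ^ k = 0
  · obtain ⟨k, hk⟩ := hz
    refine ⟨0, ?_⟩
    have hev : ∀ᶠ F : Finset ℕ in Filter.atTop, ∏ i ∈ F, (1 - a * q ^ i) = 0 := by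
      filter_upwards [Filter.eventually_ge_atTop ({k} : Finset ℕ)] with F hF
      exact Finset.prod_eq_zero (hF (Finset.mem_singleton_self k)) hk
    exact (Filter.tendsto_congr' hev).mpr tendsto_const_nhds |>.congr' (by rfl) |>.mono_right le_rfl
  · push_neg at hz
    have hsum : Summable (fun n : ℕ => Complex.log (1 - a * q ^ n)) := by
      have h0 : Filter.Tendsto (fun n : ℕ => ‖a‖ * ‖q‖ ^ n) Filter.atTop (nhds 0) := by
        simpa using (tendsto_pow_atTop_nhds_zero_of_lt_one (norm_nonneg q) hq).const_mul ‖a‖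
      obtain ⟨M, hM⟩ := (Filter.eventually_atTop).1 (h0.eventually_le_const (by norm_num : (0:ℝ) < 1/2))
      rw [← summable_nat_add_iff M]
      apply Summable.of_norm_bounded (g := fun n : ℕ => 3/2 * (‖a‖ * ‖q‖ ^ (n + M)))
      · exact (((summable_geometric_of_lt_one (norm_nonneg q) hq).mul_left ‖a‖).comp_injective
          (add_left_injective M)).mul_left _ |>.congr (fun n => rfl)
      · intro n
        have hb : ‖-(a * q ^ (n + M))‖ ≤ 1/2 := by
          rw [norm_neg, norm_mul, norm_pow]; exact hM (n + M) (Nat.le_add_left M n)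
        have := Complex.norm_log_one_add_half_le_self hb
        simpa [sub_eq_add_neg, norm_mul, norm_pow, norm_neg] using this
    exact Complex.multipliable_of_summable_log hsum

/-- shifted multipliability -/
lemma mult_aux_shift {q : ℂ} (hq : ‖q‖ < 1) (a : ℂ) (k : ℕ) :
    Multipliable (fun i : ℕ => 1 - a * q ^ (i + k)) := by
  have := mult_aux hq (a * q ^ k)
  refine this.congr fun i => ?_
  rw [pow_add]; ring

/-- recursion -/
lemma qPoch_rec {q : ℂ} (hq : ‖q‖ < 1) (a : ℂ) :
    qPochInf a q = (1 - a) * qPochInf (a * q) q := by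
  unfold qPochInf
  rw [tprod_eq_zero_mul' (f := fun i : ℕ => 1 - a * q ^ i) (mult_aux_shift hq a 1)]
  congr 1
  · simp
  · exact tprod_congr fun i => by rw [pow_succ]; ring

lemma norm_qPochInf {q : ℂ} (hq : ‖q‖ < 1) (a : ℂ) :
    ‖qPochInf a q‖ = ∏' i : ℕ, ‖1 - a * q ^ i‖ := Multipliable.norm_tprod (mult_aux hq a)

lemma mult_norm {q : ℂ} (hq : ‖q‖ < 1) (a : ℂ) :
    Multipliable (fun i : ℕ => ‖1 - a * q ^ i‖) := (mult_aux hq a).norm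

lemma tprod_le_tprod_real {f g : ℕ → ℝ} (h0 : ∀ i, 0 ≤ f i) (h : ∀ i, f i ≤ g i)
    (hf : Multipliable f) (hg : Multipliable g) : ∏' i, f i ≤ ∏' i, g i :=
  le_of_tendsto_of_tendsto' hf.hasProd hg.hasProd fun F =>
    Finset.prod_le_prod (fun i _ => h0 i) (fun i _ => h i)

lemma tprod_nonneg_real {f : ℕ → ℝ} (h : ∀ i, 0 ≤ f i) : 0 ≤ ∏' i, f i := by
  by_cases hf : Multipliable f
  · exact ge_of_tendsto' hf.hasProd fun F => Finset.prod_nonneg fun i _ => h i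
  · rw [tprod_eq_one_of_not_multipliable hf]; norm_num

lemma finset_one_sub_sum_le_prod (u : ℕ → ℝ) (h0 : ∀ i, 0 ≤ u i) (h1 : ∀ i, u i ≤ 1)
    (F : Finset ℕ) : 1 - ∑ i ∈ F, u i ≤ ∏ i ∈ F, (1 - u i) := by
  classical
  induction F using Finset.cons_induction with
  | empty => simp
  | cons a F ha ih =>
    rw [Finset.sum_cons, Finset.prod_cons]
    have hS : 0 ≤ ∑ i ∈ F, u i := Finset.sum_nonneg fun i _ => h0 i
    have hP : 0 ≤ ∏ i ∈ F, (1 - u i) := Finset.prod_nonneg fun i _ => sub_nonneg.2 (h1 i)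
    nlinarith [h0 a, h1 a, ih]

lemma tprod_ge_one_sub_sum {v u : ℕ → ℝ} (hv : Multipliable v) (hu : Summable u)
    (h0 : ∀ i, 0 ≤ u i) (h1 : ∀ i, u i ≤ 1) (hvu : ∀ i, 1 - u i ≤ v i) :
    1 - (∑' i, u i) ≤ ∏' i, v i := by
  refine ge_of_tendsto' hv.hasProd fun F => ?_
  calc 1 - (∑' i, u i) ≤ 1 - ∑ i ∈ F, u i := by
        have := Summable.sum_le_tsum F (fun i _ => h0 i) hu; linarith
    _ ≤ ∏ i ∈ F, (1 - u i) := finset_one_sub_sum_le_prod u h0 h1 F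
    _ ≤ ∏ i ∈ F, v i := Finset.prod_le_prod (fun i _ => sub_nonneg.2 (h1 i)) (fun i _ => hvu i)

/-- multipliability of the majorant -/
lemma mult_G {Q : ℝ} (hQ0 : 0 ≤ Q) (hQ : Q < 1) (c : ℝ) (hc : 0 ≤ c) :
    Multipliable (fun i : ℕ => 1 + c * Q ^ i) := by
  have hpos : ∀ (_ : Unit) (n : ℕ), (0:ℝ) < 1 + c * Q ^ n := by
    intro _ n; positivity
  refine Real.multipliable_of_summable_log (fun n => hpos Unit.unit n) ?_
  show Summable fun n : ℕ => Real.log (1 + c * Q ^ n)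
  apply Summable.of_nonneg_of_le (fun n => Real.log_nonneg (by nlinarith [mul_nonneg hc (pow_nonneg hQ0 n)]))
    (fun n => ?_) ((summable_geometric_of_lt_one hQ0 hQ).mul_left c)
  have := Real.log_le_sub_one_of_pos (hpos Unit.unit n)
  linarith

/-- numerator upper bound -/
lemma qPoch_upper {q : ℂ} (hq : ‖q‖ < 1) (a : ℂ) :
    ‖qPochInf a q‖ ≤ ∏' i : ℕ, (1 + ‖a‖ * ‖q‖ ^ i) := by
  rw [norm_qPochInf hq]
  refine tprod_le_tprod_real (fun i => norm_nonneg _) (fun i => ?_) (mult_norm hq a)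
    (mult_G (norm_nonneg q) hq ‖a‖ (norm_nonneg a))
  calc ‖1 - a * q ^ i‖ ≤ ‖(1:ℂ)‖ + ‖a * q ^ i‖ := norm_sub_le _ _
    _ = 1 + ‖a‖ * ‖q‖ ^ i := by rw [norm_one, norm_mul, norm_pow]

/-- denominator lower bound, with a finite head of factors bounded via `|‖z‖-1|`
and a small tail. -/
lemma qPoch_lower {q : ℂ} (hq : ‖q‖ < 1) (a : ℂ) (M : ℕ)
    (htail : ∑' i : ℕ, ‖a‖ * ‖q‖ ^ (i + M) ≤ 1/2) :
    (∏ i ∈ Finset.range M, |‖a‖ * ‖q‖ ^ i - 1|) * (1/2) ≤ ‖qPochInf a q‖ := by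
  have hQ0 := norm_nonneg q
  rw [norm_qPochInf hq]
  rw [← Multipliable.prod_mul_tprod_nat_mul' (f := fun i : ℕ => ‖1 - a * q ^ i‖) (k := M)
    (((mult_aux hq (a * q ^ M)).congr (fun i => by rw [pow_add]; ring)).norm)]
  have key : ∀ z : ℂ, |‖z‖ - 1| ≤ ‖1 - z‖ := by
    intro z
    calc |‖z‖ - 1| = |‖z‖ - ‖(1:ℂ)‖| := by rw [norm_one]
      _ ≤ ‖z - 1‖ := abs_norm_sub_norm_le z 1
      _ = ‖1 - z‖ := by rw [norm_sub_rev]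
  have hu : Summable (fun i : ℕ => ‖a‖ * ‖q‖ ^ (i + M)) :=
    ((summable_geometric_of_lt_one hQ0 hq).mul_left ‖a‖).comp_injective (add_left_injective M)
  refine mul_le_mul ?_ ?_ (by norm_num) (Finset.prod_nonneg fun i _ => norm_nonneg _)
  · refine Finset.prod_le_prod (fun i _ => abs_nonneg _) fun i _ => ?_
    have := key (a * q ^ i)
    rwa [norm_mul, norm_pow] at this
  · have h1 : ∀ i : ℕ, ‖a‖ * ‖q‖ ^ (i + M) ≤ 1 := by
      intro i
      have := Summable.le_tsum hu i (fun j _ => by positivity)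
      linarith
    have := tprod_ge_one_sub_sum (v := fun i : ℕ => ‖1 - a * q ^ (i + M)‖)
      (u := fun i : ℕ => ‖a‖ * ‖q‖ ^ (i + M))
      (((mult_aux hq (a * q ^ M)).congr (fun i => by rw [pow_add]; ring)).norm)
      hu (fun i => by positivity) h1 (fun i => ?_)
    · linarith
    · have := key (a * q ^ (i + M))
      have h2 : ‖(1:ℂ) - a * q ^ (i+M)‖ ≥ 1 - ‖a * q ^ (i+M)‖ := by
        have := norm_sub_norm_le (1:ℂ) (a * q ^ (i+M)); simpa using this
      rw [norm_mul, norm_pow] at h2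
      exact h2

set_option maxHeartbeats 2000000 in
lemma psi0_step {q x s : ℂ} (hq1 : ‖q‖ < 1) (hq0 : q ≠ 0) (hx : x ≠ 0) (hs : s ≠ 0)
    (hv₁ : (1 + q * s ^ 2 / x) ≠ 0) (hv₂ : (1 + q ^ 2 * s ^ 2 / x) ≠ 0)
    (hu₃ : (1 + q * s) ≠ 0) (hu₄ : (1 - s / x) ≠ 0)
    (hw₁ : (1 - x / (q ^ 2 * s ^ 2)) ≠ 0) (hw₂ : (1 - x / (q * s ^ 2)) ≠ 0)
    (hB1q : qPochInf (-q * (q * s)) q ≠ 0) (hB2q : qPochInf (q * s / x) q ≠ 0)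
    (hB3 : qPochInf (x / s ^ 2) q ≠ 0) :
    psi0 q x (q * s) = psi0 q x s *
      ((1 - 1 / (q * s)) * (1 + x / s) * (1 + q * s) * (1 - s / x) /
        ((1 + q * s ^ 2 / x) * (1 + q ^ 2 * s ^ 2 / x) *
          (1 - x / (q ^ 2 * s ^ 2)) * (1 - x / (q * s ^ 2)))) := by
  have e1 : qPochInf (1 / (q * s)) q = (1 - 1 / (q * s)) * qPochInf (1 / s) q := by
    rw [qPoch_rec hq1 (1 / (q * s))]
    congr 2
    field_simp
  have e2 : qPochInf (-q * x / (q * s)) q = (1 + x / s) * qPochInf (-q * x / s) q := by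
    have h : -q * x / (q * s) = -(x / s) := by field_simp
    rw [h, qPoch_rec hq1 (-(x / s))]
    congr 1
    · ring
    · congr 1; ring
  have e3 : qPochInf (-q * s ^ 2 / x) q
      = (1 + q * s ^ 2 / x) * ((1 + q ^ 2 * s ^ 2 / x) * qPochInf (-q * (q * s) ^ 2 / x) q) := by
    rw [qPoch_rec hq1 (-q * s ^ 2 / x)]
    congr 1
    · ring
    rw [show -q * s ^ 2 / x * q = -(q^2 * s^2 / x) by ring, qPoch_rec hq1 (-(q^2*s^2/x))]
    congr 1
    · ring
    · congr 1; ring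
  have e4 : qPochInf (-q * s) q = (1 + q * s) * qPochInf (-q * (q * s)) q := by
    rw [qPoch_rec hq1 (-q * s)]
    congr 1
    · ring
    · congr 1; ring
  have e5 : qPochInf (s / x) q = (1 - s / x) * qPochInf (q * s / x) q := by
    rw [qPoch_rec hq1 (s / x)]
    congr 1
    congr 1; ring
  have e6 : qPochInf (x / (q * s) ^ 2) q
      = (1 - x / (q ^ 2 * s ^ 2)) * ((1 - x / (q * s ^ 2)) * qPochInf (x / s ^ 2) q) := by
    rw [show x / (q*s)^2 = x / (q^2 * s^2) by ring, qPoch_rec hq1 (x / (q^2*s^2))]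
    congr 1
    rw [show x / (q^2*s^2) * q = x / (q * s^2) by field_simp, qPoch_rec hq1 (x / (q*s^2))]
    congr 2
    field_simp
  rw [psi0, psi0, e1, e2, e6, e3, e4, e5]
  set c := qPochInf q q ^ 2 / qPochInf (q ^ 2) (q ^ 2) with hc
  set A1 := qPochInf (1 / s) q with hA1
  set A2 := qPochInf (-q * x / s) q with hA2
  set A3 := qPochInf (-q * (q * s) ^ 2 / x) q with hA3
  set B1 := qPochInf (-q * (q * s)) q with hB1
  set B2 := qPochInf (q * s / x) q with hB2
  set B3 := qPochInf (x / s ^ 2) q with hB3'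
  set u1 := 1 - 1 / (q * s) with hu1
  set u2 := 1 + x / s with hu2
  set u3 := 1 + q * s with hu3
  set u4 := 1 - s / x with hu4
  set v1 := 1 + q * s ^ 2 / x with hv1
  set v2 := 1 + q ^ 2 * s ^ 2 / x with hv2
  set w1 := 1 - x / (q ^ 2 * s ^ 2) with hw1
  set w2 := 1 - x / (q * s ^ 2) with hw2
  clear_value c A1 A2 A3 B1 B2 B3 u1 u2 u3 u4 v1 v2 w1 w2
  rw [div_mul_div_comm, div_eq_div_iff (by simp [hB1q, hB2q, hB3, hw₁, hw₂])
    (by simp [hu₃, hu₄, hv₁, hv₂, hw₁, hw₂, hB1q, hB2q, hB3])]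
  ring

lemma norm_one_add_ge (z : ℂ) : 1 - ‖z‖ ≤ ‖1 + z‖ := by
  have := norm_sub_norm_le (1 : ℂ) (-z)
  simpa [sub_neg_eq_add] using this

lemma norm_one_sub_ge' (z : ℂ) : ‖z‖ - 1 ≤ ‖1 - z‖ := by
  have := norm_sub_norm_le z (1 : ℂ)
  calc ‖z‖ - 1 = ‖z‖ - ‖(1:ℂ)‖ := by rw [norm_one]
    _ ≤ ‖z - 1‖ := this
    _ = ‖1 - z‖ := by rw [norm_sub_rev]

lemma norm_one_add_le (z : ℂ) : ‖1 + z‖ ≤ 1 + ‖z‖ := by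
  simpa using norm_add_le (1 : ℂ) z

lemma norm_one_sub_le (z : ℂ) : ‖1 - z‖ ≤ 1 + ‖z‖ := by
  simpa using norm_sub_le (1 : ℂ) z

/-- the step-contraction factor -/
noncomputable def phiB (Q X r : ℝ) : ℝ :=
  ((1 + 1/(Q*r)) * (1 + X/r) * (1 + Q*r) * (1 + r/X)) /
    ((1/2) * (1/2) * (X/(2*Q^2*r^2)) * (X/(2*Q*r^2)))

lemma psi0_step_bound {q x s : ℂ} (hq1 : ‖q‖ < 1) (hq0 : q ≠ 0) (hx : x ≠ 0) {r : ℝ}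
    (hr : 0 < r) (hs : ‖s‖ = r) (hQr : ‖q‖ * r < 1) (hrx : r < ‖x‖)
    (hsm : ‖q‖ * r ^ 2 / ‖x‖ ≤ 1/2)
    (hB1q : qPochInf (-q * (q * s)) q ≠ 0) (hB2q : qPochInf (q * s / x) q ≠ 0)
    (hB3 : qPochInf (x / s ^ 2) q ≠ 0) :
    ‖psi0 q x (q * s)‖ ≤ ‖psi0 q x s‖ * phiB ‖q‖ ‖x‖ r := by
  have hQ0 : 0 < ‖q‖ := norm_pos_iff.2 hq0
  have hX0 : 0 < ‖x‖ := norm_pos_iff.2 hx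
  have hQ1 : ‖q‖ < 1 := hq1
  have hs0 : s ≠ 0 := by
    intro h; rw [h, norm_zero] at hs; exact absurd hs.symm (ne_of_gt hr)
  have hnv1 : ‖(q * s ^ 2 / x : ℂ)‖ = ‖q‖ * r ^ 2 / ‖x‖ := by
    rw [norm_div, norm_mul, norm_pow, hs]
  have hnv2 : ‖(q ^ 2 * s ^ 2 / x : ℂ)‖ = ‖q‖ ^ 2 * r ^ 2 / ‖x‖ := by
    rw [norm_div, norm_mul, norm_pow, norm_pow, hs]
  have hnu3 : ‖(q * s : ℂ)‖ = ‖q‖ * r := by rw [norm_mul, hs]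
  have hnu4 : ‖(s / x : ℂ)‖ = r / ‖x‖ := by rw [norm_div, hs]
  have hnw1 : ‖(x / (q ^ 2 * s ^ 2) : ℂ)‖ = ‖x‖ / (‖q‖ ^ 2 * r ^ 2) := by
    rw [norm_div, norm_mul, norm_pow, norm_pow, hs]
  have hnw2 : ‖(x / (q * s ^ 2) : ℂ)‖ = ‖x‖ / (‖q‖ * r ^ 2) := by
    rw [norm_div, norm_mul, norm_pow, hs]
  have hnu1 : ‖(1 / (q * s) : ℂ)‖ = 1 / (‖q‖ * r) := by
    rw [norm_div, norm_one, norm_mul, hs]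
  have hnu2 : ‖(x / s : ℂ)‖ = ‖x‖ / r := by rw [norm_div, hs]
  have hQrr : 0 < ‖q‖ * r ^ 2 := by positivity
  have hsm2 : ‖q‖ ^ 2 * r ^ 2 / ‖x‖ ≤ ‖q‖ * r ^ 2 / ‖x‖ := by
    gcongr
    nlinarith
  have hXQr : (2:ℝ) ≤ ‖x‖ / (‖q‖ * r ^ 2) := by
    rw [div_le_iff₀ hX0] at hsm
    rw [le_div_iff₀ hQrr]; linarith
  have hXQ2r : (2:ℝ) ≤ ‖x‖ / (‖q‖ ^ 2 * r ^ 2) := by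
    refine le_trans hXQr ?_
    rw [div_le_div_iff₀ (by positivity) (by positivity)]
    have key : ‖q‖ ^ 2 * r ^ 2 ≤ ‖q‖ * r ^ 2 := by nlinarith
    nlinarith [mul_le_mul_of_nonneg_left key hX0.le]
  have hv1low : 1/2 ≤ ‖(1 + q * s ^ 2 / x : ℂ)‖ := by
    have h1 := norm_one_add_ge (q * s ^ 2 / x)
    rw [hnv1] at h1; linarith
  have hv2low : 1/2 ≤ ‖(1 + q ^ 2 * s ^ 2 / x : ℂ)‖ := by
    have h1 := norm_one_add_ge (q ^ 2 * s ^ 2 / x)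
    rw [hnv2] at h1; linarith
  have hw1low : ‖x‖ / (2 * ‖q‖ ^ 2 * r ^ 2) ≤ ‖(1 - x / (q ^ 2 * s ^ 2) : ℂ)‖ := by
    have h1 := norm_one_sub_ge' (x / (q ^ 2 * s ^ 2))
    rw [hnw1] at h1
    have : ‖x‖ / (2 * ‖q‖ ^ 2 * r ^ 2) = ‖x‖ / (‖q‖ ^ 2 * r ^ 2) / 2 := by ring
    rw [this]; linarith
  have hw2low : ‖x‖ / (2 * ‖q‖ * r ^ 2) ≤ ‖(1 - x / (q * s ^ 2) : ℂ)‖ := by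
    have h1 := norm_one_sub_ge' (x / (q * s ^ 2))
    rw [hnw2] at h1
    have : ‖x‖ / (2 * ‖q‖ * r ^ 2) = ‖x‖ / (‖q‖ * r ^ 2) / 2 := by ring
    rw [this]; linarith
  have hu3low : (0:ℝ) < 1 - ‖q‖ * r := by linarith
  have hu3ne : (1 + q * s : ℂ) ≠ 0 := by
    intro h
    have := norm_one_add_ge (q * s); rw [hnu3, h, norm_zero] at this; linarith
  have hu4ne : (1 - s / x : ℂ) ≠ 0 := by
    intro h
    have h1 : ‖(s / x : ℂ)‖ < 1 := by rw [hnu4, div_lt_one hX0]; exact hrx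
    have := norm_sub_norm_le (1 : ℂ) (s / x)
    rw [h, norm_zero, norm_one] at this; linarith
  have hv1ne : (1 + q * s ^ 2 / x : ℂ) ≠ 0 := by
    intro h; rw [h, norm_zero] at hv1low; linarith
  have hv2ne : (1 + q ^ 2 * s ^ 2 / x : ℂ) ≠ 0 := by
    intro h; rw [h, norm_zero] at hv2low; linarith
  have hw1pos : (0:ℝ) < ‖x‖ / (2 * ‖q‖ ^ 2 * r ^ 2) := by positivity
  have hw2pos : (0:ℝ) < ‖x‖ / (2 * ‖q‖ * r ^ 2) := by positivity
  have hw1ne : (1 - x / (q ^ 2 * s ^ 2) : ℂ) ≠ 0 := by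
    intro h; rw [h, norm_zero] at hw1low; linarith
  have hw2ne : (1 - x / (q * s ^ 2) : ℂ) ≠ 0 := by
    intro h; rw [h, norm_zero] at hw2low; linarith
  rw [psi0_step hq1 hq0 hx hs0 hv1ne hv2ne hu3ne hu4ne hw1ne hw2ne hB1q hB2q hB3]
  rw [norm_mul]
  apply mul_le_mul_of_nonneg_left _ (norm_nonneg _)
  rw [norm_div, norm_mul, norm_mul, norm_mul, norm_mul, norm_mul, norm_mul]
  have b1 : ‖(1 - 1/(q*s) : ℂ)‖ ≤ 1 + 1/(‖q‖*r) := by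
    have := norm_one_sub_le (1/(q*s)); rwa [hnu1] at this
  have b2 : ‖(1 + x/s : ℂ)‖ ≤ 1 + ‖x‖/r := by
    have := norm_one_add_le (x/s); rwa [hnu2] at this
  have b3 : ‖(1 + q*s : ℂ)‖ ≤ 1 + ‖q‖*r := by
    have := norm_one_add_le (q*s); rwa [hnu3] at this
  have b4 : ‖(1 - s/x : ℂ)‖ ≤ 1 + r/‖x‖ := by
    have := norm_one_sub_le (s/x); rwa [hnu4] at this
  unfold phiB
  apply div_le_div₀ (by positivity) ?_ (by positivity) ?_
  · gcongr
  · calc (1:ℝ)/2 * (1/2) * (‖x‖/(2*‖q‖^2*r^2)) * (‖x‖/(2*‖q‖*r^2))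
        ≤ ‖(1 + q * s ^ 2 / x : ℂ)‖ * ‖(1 + q ^ 2 * s ^ 2 / x : ℂ)‖ *
          ‖(1 - x / (q ^ 2 * s ^ 2) : ℂ)‖ * ‖(1 - x / (q * s ^ 2) : ℂ)‖ := by
          gcongr
    _ = _ := by ring

lemma geom_tail_sum {c Q : ℝ} (hQ0 : 0 ≤ Q) (hQ : Q < 1) (M : ℕ) :
    ∑' i : ℕ, c * Q ^ (i + M) = c * Q ^ M / (1 - Q) := by
  calc ∑' i : ℕ, c * Q ^ (i + M) = ∑' i : ℕ, (c * Q ^ M) * Q ^ i :=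
        tsum_congr fun i => by rw [pow_add]; ring
    _ = (c * Q ^ M) * (1 - Q)⁻¹ := by
        rw [tsum_mul_left, tsum_geometric_of_lt_one hQ0 hQ]
    _ = c * Q ^ M / (1 - Q) := by rw [div_eq_mul_inv]

lemma psi0_base_bound {q x : ℂ} (hq1 : ‖q‖ < 1) (hq0 : q ≠ 0) (hx : x ≠ 0) {r : ℝ}
    (hr : 0 < r)
    (hc1 : ‖q‖ * r / (1 - ‖q‖) ≤ 1/2) (hc2 : (r / ‖x‖) / (1 - ‖q‖) ≤ 1/2)
    (hne : ∀ i : ℕ, ‖x‖ / r ^ 2 * ‖q‖ ^ i ≠ 1) :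
    ∃ B : ℝ, 0 ≤ B ∧ ∀ s : ℂ, ‖s‖ = r → ‖psi0 q x s‖ ≤ B := by
  have hQ0 : 0 < ‖q‖ := norm_pos_iff.2 hq0
  have hX0 : 0 < ‖x‖ := norm_pos_iff.2 hx
  have hQ1' : (0:ℝ) < 1 - ‖q‖ := by linarith
  -- choose M for the tail of B3
  obtain ⟨M, hM⟩ : ∃ M : ℕ, (‖x‖ / r ^ 2) * ‖q‖ ^ M / (1 - ‖q‖) ≤ 1/2 := by
    have h0 : Filter.Tendsto (fun M : ℕ => (‖x‖ / r ^ 2) * ‖q‖ ^ M / (1 - ‖q‖))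
        Filter.atTop (nhds 0) := by
      simpa using ((tendsto_pow_atTop_nhds_zero_of_lt_one (norm_nonneg q) hq1).const_mul
        (‖x‖ / r ^ 2)).div_const (1 - ‖q‖)
    obtain ⟨M, hM⟩ := (Filter.eventually_atTop).1
      (h0.eventually_le_const (by norm_num : (0:ℝ) < 1/2))
    exact ⟨M, hM M le_rfl⟩
  set δ : ℝ := ∏ i ∈ Finset.range M, |‖x‖ / r ^ 2 * ‖q‖ ^ i - 1| with hδ
  have hδpos : 0 < δ := Finset.prod_pos fun i _ => abs_pos.2 (sub_ne_zero.2 (hne i))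
  set G1 : ℝ := ∏' i : ℕ, (1 + (1/r) * ‖q‖ ^ i) with hG1
  set G2 : ℝ := ∏' i : ℕ, (1 + (‖q‖ * ‖x‖ / r) * ‖q‖ ^ i) with hG2
  set G3 : ℝ := ∏' i : ℕ, (1 + (‖q‖ * r ^ 2 / ‖x‖) * ‖q‖ ^ i) with hG3
  have hG1n : 0 ≤ G1 := tprod_nonneg_real fun i => by positivity
  have hG2n : 0 ≤ G2 := tprod_nonneg_real fun i => by positivity
  have hG3n : 0 ≤ G3 := tprod_nonneg_real fun i => by positivity
  set C : ℝ := ‖(qPochInf q q ^ 2 / qPochInf (q ^ 2) (q ^ 2) : ℂ)‖ with hC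
  refine ⟨C * (G1 * G2 * G3) / (1/2 * (1/2) * (δ * (1/2))), by positivity, fun s hs => ?_⟩
  have hs0 : s ≠ 0 := by
    intro h; rw [h, norm_zero] at hs; exact absurd hs.symm (ne_of_gt hr)
  -- numerator bounds
  have hA1 : ‖qPochInf (1/s) q‖ ≤ G1 := by
    have h := qPoch_upper hq1 (1/s)
    have e : ‖(1/s : ℂ)‖ = 1/r := by rw [norm_div, norm_one, hs]
    rw [hG1]; simpa only [e] using h
  have hA2 : ‖qPochInf (-q * x / s) q‖ ≤ G2 := by
    have h := qPoch_upper hq1 (-q * x / s)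
    have e : ‖(-q * x / s : ℂ)‖ = ‖q‖ * ‖x‖ / r := by
      rw [norm_div, norm_mul, norm_neg, hs]
    rw [hG2]; simpa only [e] using h
  have hA3 : ‖qPochInf (-q * s ^ 2 / x) q‖ ≤ G3 := by
    have h := qPoch_upper hq1 (-q * s ^ 2 / x)
    have e : ‖(-q * s ^ 2 / x : ℂ)‖ = ‖q‖ * r ^ 2 / ‖x‖ := by
      rw [norm_div, norm_mul, norm_neg, norm_pow, hs]
    rw [hG3]; simpa only [e] using h
  -- denominator lower bounds
  have hB1 : 1/2 ≤ ‖qPochInf (-q * s) q‖ := by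
    have e : ‖(-q * s : ℂ)‖ = ‖q‖ * r := by rw [norm_mul, norm_neg, hs]
    have h := qPoch_lower hq1 (-q * s) 0 ?_
    · simpa using h
    · rw [e, geom_tail_sum (norm_nonneg q) hq1 0]
      simpa using hc1
  have hB2 : 1/2 ≤ ‖qPochInf (s / x) q‖ := by
    have e : ‖(s / x : ℂ)‖ = r / ‖x‖ := by rw [norm_div, hs]
    have h := qPoch_lower hq1 (s / x) 0 ?_
    · simpa using h
    · rw [e, geom_tail_sum (norm_nonneg q) hq1 0]
      simpa using hc2
  have hB3 : δ * (1/2) ≤ ‖qPochInf (x / s ^ 2) q‖ := by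
    have e : ‖(x / s ^ 2 : ℂ)‖ = ‖x‖ / r ^ 2 := by rw [norm_div, norm_pow, hs]
    have h := qPoch_lower hq1 (x / s ^ 2) M ?_
    · rw [hδ]; simpa only [e] using h
    · rw [e, geom_tail_sum (norm_nonneg q) hq1 M]
      exact hM
  -- assemble
  rw [psi0, norm_div, norm_mul, norm_mul, norm_mul, norm_mul, norm_mul]
  apply div_le_div₀ (by positivity) ?_ (by positivity) ?_
  · gcongr <;> first | assumption | positivity
  · gcongr <;> first | assumption | positivity

lemma tprod_eq_zero_complex {f : ℕ → ℂ} (k : ℕ) (hk : f k = 0) : ∏' i, f i = 0 := by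
  have h : HasProd f 0 := by
    have hev : ∀ᶠ F : Finset ℕ in Filter.atTop, ∏ i ∈ F, f i = 0 := by
      filter_upwards [Filter.eventually_ge_atTop ({k} : Finset ℕ)] with F hF
      exact Finset.prod_eq_zero (hF (Finset.mem_singleton_self k)) hk
    exact (Filter.tendsto_congr' hev).mpr tendsto_const_nhds
  exact h.tprod_eq

noncomputable def polyB (Q X r : ℝ) : ℝ :=
  16*Q^3*r^2/X^2 * ((r + 1/Q) * (r + X) * (1 + Q*r) * (1 + r/X))

lemma phiB_eq {Q X r : ℝ} (hQ : 0 < Q) (hX : 0 < X) (hr : 0 < r) :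
    phiB Q X r = polyB Q X r := by
  unfold phiB polyB
  field_simp
  ring

lemma phiB_tendsto {Q X : ℝ} (hQ : 0 < Q) (hX : 0 < X) {r : ℕ → ℝ} (hr : ∀ N, 0 < r N)
    (h : Filter.Tendsto r Filter.atTop (nhds 0)) :
    Filter.Tendsto (fun N => phiB Q X (r N)) Filter.atTop (nhds 0) := by
  have hcont : Continuous (fun t : ℝ => polyB Q X t) := by
    unfold polyB; fun_prop
  have h0 : polyB Q X 0 = 0 := by unfold polyB; ring
  have := (hcont.tendsto 0).comp h
  rw [h0] at this
  refine this.congr fun N => ?_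
  exact (phiB_eq hQ hX (hr N)).symm

lemma phiB_pos {Q X r : ℝ} (hQ : 0 < Q) (hX : 0 < X) (hr : 0 < r) : 0 < phiB Q X r := by
  unfold phiB; positivity

/-- If the circles `|s| = ρ₀·|q|^N` (for all `N ≥ 1`) avoid the poles of `ψ`, then the
contour integrals `(1/(2πi)) ∮_{|s| = ρ₀·|q|^N} ψ(s) ds/s` tend to `0` as `N → ∞`. -/
theorem stmt_19 (q x : ℂ) (hq0 : 0 < ‖q‖) (hq1 : ‖q‖ < 1) (hx : x ≠ 0)
    (ρ₀ : ℝ) (hρ : 0 < ρ₀)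
    (havoid : ∀ N : ℕ, 1 ≤ N → ∀ s : ℂ, ‖s‖ = ρ₀ * ‖q‖ ^ N →
      qPochInf (-q * s) q ≠ 0 ∧ qPochInf (s / x) q ≠ 0 ∧ qPochInf (x / s ^ 2) q ≠ 0) :
    Filter.Tendsto
      (fun N : ℕ => (2 * Real.pi * Complex.I)⁻¹ *
        ∮ s in C(0, ρ₀ * ‖q‖ ^ N), psi0 q x s / s)
      Filter.atTop (nhds 0) := by
  have hQ0 : (0:ℝ) < ‖q‖ := hq0
  have hQ1 : ‖q‖ < 1 := hq1
  have hq0' : q ≠ 0 := norm_pos_iff.1 hQ0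
  have hX0 : (0:ℝ) < ‖x‖ := norm_pos_iff.2 hx
  set r : ℕ → ℝ := fun N => ρ₀ * ‖q‖ ^ N with hrdef
  have hrpos : ∀ N, 0 < r N := fun N => by positivity
  have hrtend : Filter.Tendsto r Filter.atTop (nhds 0) := by
    simpa using (tendsto_pow_atTop_nhds_zero_of_lt_one (norm_nonneg q) hQ1).const_mul ρ₀
  -- pole avoidance gives the spectral gap condition
  have hne : ∀ N : ℕ, 1 ≤ N → ∀ i : ℕ, ‖x‖ / (r N) ^ 2 * ‖q‖ ^ i ≠ 1 := by
    intro N hN i h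
    obtain ⟨s, hs⟩ := IsAlgClosed.exists_pow_nat_eq (k := ℂ) (x * q ^ i) (n := 2) (by norm_num)
    have hxq : (x * q ^ i : ℂ) ≠ 0 := by
      apply mul_ne_zero hx (pow_ne_zero _ hq0')
    have hs0 : s ≠ 0 := by
      intro h0
      rw [h0] at hs
      simp only [ne_eq, ← hs] at hxq
      exact hxq (by ring)
    have hnorm : ‖s‖ = r N := by
      have h2 : ‖s‖ ^ 2 = ‖x‖ * ‖q‖ ^ i := by
        rw [← norm_pow, hs, norm_mul, norm_pow]
      have h3 : ‖x‖ * ‖q‖ ^ i = (r N) ^ 2 := by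
        have hr2 : (r N) ^ 2 ≠ 0 := ne_of_gt (by positivity)
        field_simp at h
        rw [div_eq_one_iff_eq hr2] at h
        linarith
      nlinarith [norm_nonneg s, hrpos N, h2, h3]
    have h3 := (havoid N hN s (hnorm.trans rfl)).2.2
    apply h3
    unfold qPochInf
    refine tprod_eq_zero_complex i ?_
    show (1 : ℂ) - x / s ^ 2 * q ^ i = 0
    rw [sub_eq_zero]
    rw [eq_comm, hs]
    field_simp
  have havoid' : ∀ N : ℕ, 1 ≤ N → ∀ s : ℂ, ‖s‖ = r N →
      qPochInf (-q * s) q ≠ 0 ∧ qPochInf (s / x) q ≠ 0 ∧ qPochInf (x / s ^ 2) q ≠ 0 :=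
    fun N hN s hs => havoid N hN s hs
  -- eventual smallness conditions
  have hev : ∀ᶠ N : ℕ in Filter.atTop,
      1 ≤ N ∧ ‖q‖ * r N / (1 - ‖q‖) ≤ 1/2 ∧ (r N / ‖x‖) / (1 - ‖q‖) ≤ 1/2 ∧
        ‖q‖ * r N < 1 ∧ r N < ‖x‖ ∧ ‖q‖ * (r N) ^ 2 / ‖x‖ ≤ 1/2 ∧
        phiB ‖q‖ ‖x‖ (r N) ≤ 1/2 := by
    have t1 : Filter.Tendsto (fun N => ‖q‖ * r N / (1 - ‖q‖)) Filter.atTop (nhds 0) := by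
      simpa using (hrtend.const_mul ‖q‖).div_const (1 - ‖q‖)
    have t2 : Filter.Tendsto (fun N => (r N / ‖x‖) / (1 - ‖q‖)) Filter.atTop (nhds 0) := by
      simpa using (hrtend.div_const ‖x‖).div_const (1 - ‖q‖)
    have t3 : Filter.Tendsto (fun N => ‖q‖ * r N) Filter.atTop (nhds 0) := by
      simpa using hrtend.const_mul ‖q‖
    have tsq : Filter.Tendsto (fun N => (r N) ^ 2) Filter.atTop (nhds 0) := by
      have := hrtend.mul hrtend
      simpa [sq] using this
    have t4 : Filter.Tendsto (fun N => ‖q‖ * (r N) ^ 2 / ‖x‖) Filter.atTop (nhds 0) := by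
      simpa using (tsq.const_mul ‖q‖).div_const ‖x‖
    have t5 := phiB_tendsto hQ0 hX0 hrpos hrtend
    filter_upwards [Filter.eventually_ge_atTop 1,
      t1.eventually_le_const (by norm_num : (0:ℝ) < 1/2),
      t2.eventually_le_const (by norm_num : (0:ℝ) < 1/2),
      t3.eventually_lt_const (by norm_num : (0:ℝ) < 1),
      hrtend.eventually_lt_const hX0,
      t4.eventually_le_const (by norm_num : (0:ℝ) < 1/2),
      t5.eventually_le_const (by norm_num : (0:ℝ) < 1/2)] with N h1 h2 h3 h4 h5 h6 h7
    exact ⟨h1, h2, h3, h4, h5, h6, h7⟩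
  obtain ⟨N₀, hN₀⟩ := Filter.eventually_atTop.1 hev
  obtain ⟨hN₀1, hc1, hc2, -, -, -, -⟩ := hN₀ N₀ le_rfl
  obtain ⟨B, hB0, hB⟩ := psi0_base_bound hQ1 hq0' hx (hrpos N₀) hc1 hc2 (hne N₀ hN₀1)
  -- inductive decay along shrinking circles
  have claim : ∀ n : ℕ, ∀ s : ℂ, ‖s‖ = r (N₀ + n) → ‖psi0 q x s‖ ≤ B * (1/2) ^ n := by
    intro n
    induction n with
    | zero => intro s hs; simpa using hB s (by simpa using hs)
    | succ n ih =>
      intro s hs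
      have hs' : ‖s / q‖ = r (N₀ + n) := by
        rw [norm_div, hs, hrdef]
        show ρ₀ * ‖q‖ ^ (N₀ + n + 1) / ‖q‖ = ρ₀ * ‖q‖ ^ (N₀ + n)
        rw [pow_succ]
        field_simp
      have hqs : q * (s / q) = s := by field_simp
      obtain ⟨-, -, -, c3, c4, c5, c6⟩ := hN₀ (N₀ + n) (Nat.le_add_right _ _)
      have h1 : 1 ≤ N₀ + n + 1 := by omega
      have h1' : 1 ≤ N₀ + n := by omega
      have hB1q : qPochInf (-q * (q * (s / q))) q ≠ 0 := by
        rw [hqs]; exact (havoid' _ h1 s hs).1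
      have hB2q : qPochInf (q * (s / q) / x) q ≠ 0 := by
        rw [hqs]; exact (havoid' _ h1 s hs).2.1
      have hB3 : qPochInf (x / (s / q) ^ 2) q ≠ 0 := (havoid' _ h1' (s / q) hs').2.2
      have hstep := psi0_step_bound hQ1 hq0' hx (hrpos (N₀ + n)) hs' c3 c4 c5 hB1q hB2q hB3
      rw [hqs] at hstep
      calc ‖psi0 q x s‖ ≤ ‖psi0 q x (s / q)‖ * phiB ‖q‖ ‖x‖ (r (N₀ + n)) := hstep
        _ ≤ (B * (1/2) ^ n) * (1/2) :=
            mul_le_mul (ih (s / q) hs') c6 (phiB_pos hQ0 hX0 (hrpos _)).le (by positivity)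
        _ = B * (1/2) ^ (n + 1) := by ring
  -- bound the contour integrals
  have hint : ∀ N : ℕ, N₀ ≤ N →
      ‖(2 * Real.pi * Complex.I : ℂ)⁻¹ * ∮ s in C(0, r N), psi0 q x s / s‖
        ≤ B * (1/2) ^ (N - N₀) := by
    intro N hN
    have hb : ∀ z ∈ Metric.sphere (0:ℂ) (r N),
        ‖psi0 q x z / z‖ ≤ (B * (1/2) ^ (N - N₀)) / r N := by
      intro z hz
      have hzn : ‖z‖ = r N := by
        simpa [mem_sphere_iff_norm] using hz
      rw [norm_div, hzn]
      refine div_le_div₀ (mul_nonneg hB0 (by positivity)) ?_ (hrpos N) le_rfl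
      refine claim (N - N₀) z ?_
      rw [hzn, Nat.add_sub_cancel' hN]
    have h := circleIntegral.norm_two_pi_i_inv_smul_integral_le_of_norm_le_const (hrpos N).le hb
    rw [smul_eq_mul] at h
    calc ‖(2 * Real.pi * Complex.I : ℂ)⁻¹ * ∮ s in C(0, r N), psi0 q x s / s‖
        ≤ r N * ((B * (1/2) ^ (N - N₀)) / r N) := h
      _ = B * (1/2) ^ (N - N₀) := by
          field_simp
          rw [mul_comm (r N), mul_div_assoc, div_self (hrpos N).ne', mul_one]
  -- squeeze
  have hg : Filter.Tendsto (fun N : ℕ => B * (1/2:ℝ) ^ (N - N₀)) Filter.atTop (nhds 0) := by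
    have := ((tendsto_pow_atTop_nhds_zero_of_lt_one (by norm_num : (0:ℝ) ≤ 1/2)
      (by norm_num : (1/2:ℝ) < 1)).comp (Filter.tendsto_sub_atTop_nat N₀)).const_mul B
    simpa using this
  refine squeeze_zero_norm' ?_ hg
  filter_upwards [Filter.eventually_ge_atTop N₀] with N hN
  exact hint N hN
end
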